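/- arXiv:1110.6424 — 8 statements merged into one kernel-verified Lean document; each statement's English description precedes it below -/
import Mathlib

section
/- (Basic inequalities.) Let v = (v_i)_{i ∈ nℤ ± I} be a d-face of type (n, I). Then for every i ∈ I and every j ∈ {1,…,n}: if j ∈ A_i, then d ≤ μ_i^v(j) + μ_i^v(j*) ≤ d+1 and d−1 ≤ μ_{−i}^v(j) + μ_{−i}^v(j*) ≤ d; and if j ∈ B_i, then d−1 ≤ μ_i^v(j) + μ_i^v(j*) ≤ d and d ≤ μ_{−i}^v(j) + μ_{−i}^v(j*) ≤ d+1. -/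
open Finset

namespace FaceComb

/-- Membership of `i` in `nℤ ± I`. -/
def FaceIdx (n : ℕ) (I : Finset ℕ) (i : ℤ) : Prop :=
  ∃ a ∈ I, ∃ b : ℤ, i = (n : ℤ) * b + (a : ℤ) ∨ i = (n : ℤ) * b - (a : ℤ)

/-- The vector `ω_i ∈ ℤ^n`: writing `i = b·n + c` with `0 ≤ c < n`, the first `c`
entries are `-b-1` and the rest are `-b`. -/
def omegaVec (n : ℕ) (i : ℤ) (j : Fin n) : ℤ :=
  if ((j : ℕ) : ℤ) < i % (n : ℤ) then -(i / (n : ℤ)) - 1 else -(i / (n : ℤ))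

/-- `v` is a `d`-face of type `(n, I)` (conditions imposed for indices in `nℤ ± I`). -/
structure IsFace (n : ℕ) (I : Finset ℕ) (d : ℤ) (v : ℤ → Fin n → ℤ) : Prop where
  per : ∀ i, FaceIdx n I i → ∀ j, v (i + (n : ℤ)) j = v i j - 1
  mono : ∀ i i', FaceIdx n I i → FaceIdx n I i' → i ≤ i' → ∀ j, v i' j ≤ v i j
  sumEq : ∀ i i', FaceIdx n I i → FaceIdx n I i' → (∑ j, v i j) - (∑ j, v i' j) = i' - i
  dual : ∀ i, FaceIdx n I i → ∀ j, v i j + v (-i) j.rev = d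

/-- `μ_i^v := v_i − ω_i`. -/
def muFace (n : ℕ) (v : ℤ → Fin n → ℤ) (i : ℤ) (j : Fin n) : ℤ :=
  v i j - omegaVec n i j

/-- `j ∈ A_a`, i.e. (1-indexed) `j ∈ {1,…,a} ∪ {n+1−a,…,n}`. -/
def memA (n a : ℕ) (j : Fin n) : Prop := (j : ℕ) < a ∨ n - a ≤ (j : ℕ)

/-- `j ∈ B_a`, i.e. (1-indexed) `j ∈ {a+1,…,n−a}`. -/
def memB (n a : ℕ) (j : Fin n) : Prop := a ≤ (j : ℕ) ∧ (j : ℕ) < n - a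

/-- Basic inequalities. -/
theorem statement0 (n : ℕ) (hn : 0 < n) (I : Finset ℕ) (hI : I.Nonempty)
    (hIle : ∀ a ∈ I, a ≤ n / 2) (d : ℤ) (v : ℤ → Fin n → ℤ) (hv : IsFace n I d v)
    (i : ℕ) (hi : i ∈ I) (j : Fin n) :
    (memA n i j →
      (d ≤ muFace n v (i : ℤ) j + muFace n v (i : ℤ) j.rev ∧
        muFace n v (i : ℤ) j + muFace n v (i : ℤ) j.rev ≤ d + 1) ∧
      (d - 1 ≤ muFace n v (-(i : ℤ)) j + muFace n v (-(i : ℤ)) j.rev ∧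
        muFace n v (-(i : ℤ)) j + muFace n v (-(i : ℤ)) j.rev ≤ d)) ∧
    (memB n i j →
      (d - 1 ≤ muFace n v (i : ℤ) j + muFace n v (i : ℤ) j.rev ∧
        muFace n v (i : ℤ) j + muFace n v (i : ℤ) j.rev ≤ d) ∧
      (d ≤ muFace n v (-(i : ℤ)) j + muFace n v (-(i : ℤ)) j.rev ∧
        muFace n v (-(i : ℤ)) j + muFace n v (-(i : ℤ)) j.rev ≤ d + 1)) := by
  have hin : i ≤ n / 2 := hIle i hi
  have hiLt : i < n := by omega
  have hi2 : 2 * i ≤ n := by omega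
  have hFi : FaceIdx n I (i : ℤ) := ⟨i, hi, 0, Or.inl (by ring)⟩
  have hFni : FaceIdx n I (-(i : ℤ)) := ⟨i, hi, 0, Or.inr (by ring)⟩
  have hFni' : FaceIdx n I (-(i : ℤ) + n) := ⟨i, hi, 1, Or.inr (by ring)⟩
  have hub : ∀ k : Fin n, v (i : ℤ) k ≤ v (-(i : ℤ)) k := fun k =>
    hv.mono _ _ hFni hFi (by omega) k
  have hlb : ∀ k : Fin n, v (-(i : ℤ)) k - 1 ≤ v (i : ℤ) k := by
    intro k
    have h1 := hv.mono (i : ℤ) (-(i : ℤ) + n) hFi hFni'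
      (by have : (2 * i : ℤ) ≤ n := by exact_mod_cast hi2
          linarith) k
    have h2 := hv.per (-(i : ℤ)) hFni k
    omega
  have hd : ∀ k : Fin n, v (i : ℤ) k + v (-(i : ℤ)) k.rev = d := hv.dual _ hFi
  have hjrr : j.rev.rev = j := Fin.rev_rev j
  have hs1a : d - 1 ≤ v (i : ℤ) j + v (i : ℤ) j.rev := by
    have a1 := hd j; have a2 := hlb j.rev; omega
  have hs1b : v (i : ℤ) j + v (i : ℤ) j.rev ≤ d := by
    have a1 := hd j; have a2 := hub j.rev; omega
  have hs2 : v (-(i : ℤ)) j + v (-(i : ℤ)) j.rev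
      = 2 * d - (v (i : ℤ) j + v (i : ℤ) j.rev) := by
    have a1 := hd j
    have a2 := hd j.rev
    rw [hjrr] at a2
    omega
  have hoi : ∀ k : Fin n, omegaVec n (i : ℤ) k = if (k : ℕ) < i then -1 else 0 := by
    intro k
    have h1 : (i : ℤ) % n = i := Int.emod_eq_of_lt (by positivity) (by exact_mod_cast hiLt)
    have h2 : (i : ℤ) / n = 0 := Int.ediv_eq_zero_of_lt (by positivity) (by exact_mod_cast hiLt)
    simp only [omegaVec, h1, h2]
    split_ifs <;> omega
  have honi : ∀ k : Fin n, omegaVec n (-(i : ℤ)) k = if (k : ℕ) < n - i then 0 else 1 := by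
    intro k
    have hk := k.isLt
    rcases Nat.eq_zero_or_pos i with hz | hp
    · subst hz
      simp only [Nat.cast_zero, neg_zero, omegaVec, Int.zero_emod, Int.zero_ediv]
      split_ifs <;> omega
    · have hnne : (n : ℤ) ≠ 0 := by exact_mod_cast hn.ne'
      have hmod : (-(i : ℤ)) % n = (n : ℤ) - i := by
        have h1 : (-(i : ℤ)) % n = ((n : ℤ) - i) % n := by
          conv_lhs => rw [show (-(i : ℤ)) = ((n : ℤ) - i) + n * (-1) by ring]
          rw [Int.add_mul_emod_self_left]
        rw [h1, Int.emod_eq_of_lt (by push_cast; omega) (by push_cast; omega)]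
      have hdiv : (-(i : ℤ)) / n = -1 := by
        rw [show (-(i : ℤ)) = ((n : ℤ) - i) + n * (-1) by ring,
          Int.add_mul_ediv_left _ _ hnne,
          Int.ediv_eq_zero_of_lt (by push_cast; omega) (by push_cast; omega)]
        norm_num
      simp only [omegaVec, hmod, hdiv]
      split_ifs <;> omega
  have hk := j.isLt
  simp only [muFace, hoi, honi, memA, memB, Fin.val_rev]
  split_ifs <;>
    refine ⟨fun h => ⟨⟨?_, ?_⟩, ?_, ?_⟩, fun h => ⟨⟨?_, ?_⟩, ?_, ?_⟩⟩ <;> omega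

end FaceComb
end

section
/- Let v = (v_i)_{i ∈ nℤ ± I} be a d-face of type (n, I) and let i ∈ nℤ ± I. Suppose that μ_i^v(j) + μ_i^v(j*) = d holds for all j ∈ A_i, or that it holds for all j ∈ B_i. Then μ_i^v is self-dual, i.e. μ_i^v = μ_{−i}^v. -/
open Finset

namespace FaceComb

/-!
Both sides of the claim, and the hypothesis, are invariant under `i ↦ i + n` (the shift of `v_i`
is matched by that of `ω_i`) and under `i ↦ -i` up to swapping `μ_i, μ_{-i}`, so one may take
`i = c` with `0 < c ≤ n/2`. The duality `v_i + v_{-i}^* = d` turns the hypothesis into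
`μ_c = μ_{-c}` on `A_c` or on `B_c`. Since `μ_{-c} = μ_{n-c}`, the difference
`δ = μ_c - μ_{-c}` equals `(v_c - v_{n-c}) - 1_{B_c}`, and monotonicity gives
`v_{n-c} ≤ v_c ≤ v_{-c} = v_{n-c} + 1`; so `δ ≥ 0` on `A_c` and `δ ≤ 0` on `B_c`.
As `Σ μ_i` does not depend on `i`, `Σ δ = 0`, and `δ` vanishing on one of the two complementary
sets forces it to vanish everywhere.
-/

section

variable {n : ℕ}

-- `ω_i(j) = -⌈(i - j) / n⌉`.
lemma omegaVec_bounds (i : ℤ) (j : Fin n) :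
    i - j ≤ -(n * omegaVec n i j) ∧ -(n * omegaVec n i j) < i - j + n := by
  have hn : (0 : ℤ) < n := by exact_mod_cast j.pos
  have hdiv := Int.emod_add_mul_ediv i n
  have hr := Int.emod_nonneg i hn.ne'
  have hr' := Int.emod_lt_of_pos i hn
  have hj : ((j : ℕ) : ℤ) < n := by exact_mod_cast j.is_lt
  unfold omegaVec
  split_ifs with h <;> constructor <;> linarith

lemma omegaVec_eq_of_bounds {i w : ℤ} {j : Fin n} (h₁ : i - j ≤ -(n * w))
    (h₂ : -(n * w) < i - j + n) : omegaVec n i j = w := by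
  obtain ⟨h₃, h₄⟩ := omegaVec_bounds i j
  have hn : (0 : ℤ) < n := by exact_mod_cast j.pos
  by_contra hne
  rcases lt_or_gt_of_ne hne with hlt | hlt
  · nlinarith
  · nlinarith

lemma omegaVec_add_natCast (i : ℤ) (j : Fin n) :
    omegaVec n (i + n) j = omegaVec n i j - 1 := by
  obtain ⟨h₁, h₂⟩ := omegaVec_bounds i j
  exact omegaVec_eq_of_bounds (by linarith) (by linarith)

lemma omegaVec_add_omegaVec_neg_rev (i : ℤ) (j : Fin n) :
    omegaVec n i j + omegaVec n (-i) j.rev = 0 := by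
  obtain ⟨h₁, h₂⟩ := omegaVec_bounds i j
  have hrev : ((j.rev : ℕ) : ℤ) = n - 1 - j := by rw [Fin.val_rev]; omega
  have := omegaVec_eq_of_bounds (i := -i) (w := -omegaVec n i j) (j := j.rev)
    (by rw [hrev]; linarith) (by rw [hrev]; linarith)
  omega

lemma omegaVec_of_lt {r : ℤ} (hr₀ : 0 ≤ r) (hrn : r < n) (j : Fin n) :
    omegaVec n r j = if (j : ℤ) < r then -1 else 0 := by
  simp [omegaVec, Int.emod_eq_of_lt hr₀ hrn, Int.ediv_eq_zero_of_lt hr₀ hrn]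

lemma sum_omegaVec (hn : 0 < n) (i : ℤ) : ∑ j, omegaVec n i j = -i := by
  have hn' : (0 : ℤ) < n := by exact_mod_cast hn
  obtain ⟨m, hm⟩ : ∃ m : ℕ, i % n = m := Int.eq_ofNat_of_zero_le (Int.emod_nonneg i hn'.ne')
  have hmn : m < n := by have := Int.emod_lt_of_pos i hn'; omega
  have hcard : #{j : Fin n | (j : ℕ) < m} = m := by rw [Fin.card_filter_val_lt]; omega
  simp only [omegaVec, hm, Nat.cast_lt]
  rw [Finset.sum_ite, Finset.sum_const, Finset.sum_const, hcard, Finset.filter_not,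
    Finset.card_sdiff_of_subset (Finset.filter_subset _ _), hcard, Finset.card_univ,
    Fintype.card_fin]
  have := Int.emod_add_mul_ediv i n
  simp only [nsmul_eq_mul]
  push_cast [Nat.cast_sub hmn.le]
  linarith

instance (a : ℕ) : DecidablePred (memB n a) := fun _ => instDecidableAnd

lemma omegaVec_sub_omegaVec_sub_eq {c : ℕ} (hc₀ : 0 < c) (hc : 2 * c ≤ n) (j : Fin n) :
    omegaVec n c j - omegaVec n (n - c) j = if memB n c j then 1 else 0 := by
  rw [omegaVec_of_lt (by omega) (by omega), omegaVec_of_lt (by omega) (by omega)]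
  simp only [memB]
  split_ifs <;> omega

lemma memB_iff_not_memA {a : ℕ} {j : Fin n} : memB n a j ↔ ¬ memA n a j := by
  simp only [memA, memB]; omega

namespace FaceIdx

variable {I : Finset ℕ} {i : ℤ}

lemma add_mul (hi : FaceIdx n I i) (k : ℤ) : FaceIdx n I (i + n * k) := by
  obtain ⟨a, ha, b, hb | hb⟩ := hi
  · exact ⟨a, ha, b + k, Or.inl (by rw [hb]; ring)⟩
  · exact ⟨a, ha, b + k, Or.inr (by rw [hb]; ring)⟩

lemma neg (hi : FaceIdx n I i) : FaceIdx n I (-i) := by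
  obtain ⟨a, ha, b, hb | hb⟩ := hi
  · exact ⟨a, ha, -b, Or.inr (by rw [hb]; ring)⟩
  · exact ⟨a, ha, -b, Or.inl (by rw [hb]; ring)⟩

lemma of_dvd_sub_or_dvd_add (hi : FaceIdx n I i) {c : ℤ}
    (hc : (n : ℤ) ∣ i - c ∨ (n : ℤ) ∣ i + c) : FaceIdx n I c := by
  rcases hc with ⟨k, hk⟩ | ⟨k, hk⟩
  · convert hi.add_mul (-k) using 1; linarith
  · convert hi.neg.add_mul k using 1; linarith

end FaceIdx

section muFace

variable {I : Finset ℕ} {d : ℤ} {v : ℤ → Fin n → ℤ} {i : ℤ}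

lemma muFace_add_natCast (hv : IsFace n I d v) (hi : FaceIdx n I i) (j : Fin n) :
    muFace n v (i + n) j = muFace n v i j := by
  simp only [muFace, hv.per i hi j, omegaVec_add_natCast]
  ring

lemma muFace_add_mul (hv : IsFace n I d v) (hi : FaceIdx n I i) (k : ℤ) (j : Fin n) :
    muFace n v (i + n * k) j = muFace n v i j := by
  induction k using Int.induction_on with
  | zero => simp
  | succ k ih =>
    rw [← ih, ← muFace_add_natCast hv (hi.add_mul k)]
    ring_nf
  | pred k ih =>
    rw [← ih, ← muFace_add_natCast hv (hi.add_mul (-k - 1))]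
    ring_nf

lemma muFace_eq_of_dvd (hv : IsFace n I d v) (hi : FaceIdx n I i) {i' : ℤ}
    (h : (n : ℤ) ∣ i' - i) (j : Fin n) : muFace n v i' j = muFace n v i j := by
  obtain ⟨k, hk⟩ := h
  rw [show i' = i + n * k by linarith, muFace_add_mul hv hi]

lemma muFace_add_muFace_neg_rev (hv : IsFace n I d v) (hi : FaceIdx n I i) (j : Fin n) :
    muFace n v i j + muFace n v (-i) j.rev = d := by
  have := omegaVec_add_omegaVec_neg_rev i j
  simp only [muFace]
  linarith [hv.dual i hi j]

lemma muFace_eq_neg_of_add_rev (hv : IsFace n I d v) (hi : FaceIdx n I i) {j : Fin n}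
    (h : muFace n v i j + muFace n v i j.rev = d) : muFace n v i j = muFace n v (-i) j := by
  have := muFace_add_muFace_neg_rev hv hi j.rev
  rw [Fin.rev_rev] at this
  linarith

lemma sum_muFace_eq (hn : 0 < n) (hv : IsFace n I d v) {i' : ℤ} (hi : FaceIdx n I i)
    (hi' : FaceIdx n I i') : ∑ j, muFace n v i j = ∑ j, muFace n v i' j := by
  simp only [muFace, Finset.sum_sub_distrib, sum_omegaVec hn]
  linarith [hv.sumEq i i' hi hi']

lemma muFace_eq_neg_iff_of_dvd (hv : IsFace n I d v) (hi : FaceIdx n I i) {c : ℤ}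
    (hc : (n : ℤ) ∣ i - c ∨ (n : ℤ) ∣ i + c) (j : Fin n) :
    muFace n v i j = muFace n v (-i) j ↔ muFace n v c j = muFace n v (-c) j := by
  rcases hc with ⟨k, hk⟩ | ⟨k, hk⟩
  · rw [muFace_eq_of_dvd hv hi (i' := c) ⟨-k, by linarith⟩,
      muFace_eq_of_dvd hv hi.neg (i' := -c) ⟨k, by linarith⟩]
  · rw [muFace_eq_of_dvd hv hi.neg (i' := c) ⟨k, by linarith⟩,
      muFace_eq_of_dvd hv hi (i' := -c) ⟨-k, by linarith⟩, eq_comm]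

lemma IsFace.apply_sub_apply_sub_mem_Icc (hv : IsFace n I d v) (hi : FaceIdx n I i)
    (hi₀ : 0 ≤ i) (hin : 2 * i ≤ n) (j : Fin n) : v i j - v (n - i) j ∈ Set.Icc 0 1 := by
  have hshift := hv.per (-i) hi.neg j
  have hni : FaceIdx n I (n - i) := by convert hi.neg.add_mul 1 using 1; ring
  have hlow := hv.mono i (n - i) hi hni (by omega) j
  have hup := hv.mono (-i) i hi.neg hi (by omega) j
  rw [neg_add_eq_sub] at hshift
  constructor <;> linarith

lemma muFace_sub_muFace_neg_eq (hv : IsFace n I d v) {c : ℕ} (hf : FaceIdx n I c) (hc₀ : 0 < c)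
    (hc : 2 * c ≤ n) (j : Fin n) :
    muFace n v c j - muFace n v (-c) j =
      (v c j - v (n - c) j) - if memB n c j then 1 else 0 := by
  rw [← omegaVec_sub_omegaVec_sub_eq hc₀ hc, ← muFace_add_natCast hv hf.neg, neg_add_eq_sub]
  simp only [muFace]
  ring

theorem muFace_eq_neg_of_eqOn_memA_or_memB (hn : 0 < n) (hv : IsFace n I d v) {c : ℕ}
    (hf : FaceIdx n I c) (hc : c ≤ n / 2)
    (h : (∀ j, memA n c j → muFace n v c j = muFace n v (-c) j) ∨
      (∀ j, memB n c j → muFace n v c j = muFace n v (-c) j)) (j : Fin n) :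
    muFace n v c j = muFace n v (-c) j := by
  rcases Nat.eq_zero_or_pos c with rfl | hc₀
  · simp
  have hsum : ∑ j, (muFace n v c j - muFace n v (-c) j) = 0 := by
    rw [Finset.sum_sub_distrib, sum_muFace_eq hn hv hf hf.neg, sub_self]
  have hδ := muFace_sub_muFace_neg_eq hv hf hc₀ (by omega)
  have he := hv.apply_sub_apply_sub_mem_Icc hf (by omega) (by omega)
  suffices (fun j => muFace n v c j - muFace n v (-c) j) = 0 from
    sub_eq_zero.1 (congrFun this j)
  rcases h with h | h
  · refine (Fintype.sum_eq_zero_iff_of_nonpos fun j => ?_).1 hsum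
    by_cases hj : memA n c j
    · exact (sub_eq_zero.2 (h j hj)).le
    · simp only [Pi.zero_apply, hδ, memB_iff_not_memA.2 hj, if_true]
      linarith [(he j).2]
  · refine (Fintype.sum_eq_zero_iff_of_nonneg fun j => ?_).1 hsum
    by_cases hj : memB n c j
    · exact (sub_eq_zero.2 (h j hj)).ge
    · simp only [Pi.zero_apply, hδ, hj, if_false]
      linarith [(he j).1]

end muFace

end

theorem statement1_general (n : ℕ) (hn : 0 < n) (I : Finset ℕ)
    (d : ℤ) (v : ℤ → Fin n → ℤ) (hv : IsFace n I d v)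
    (i : ℤ) (hi : FaceIdx n I i)
    (i' : ℕ) (hi'le : i' ≤ n / 2) (hcong : (n : ℤ) ∣ i - (i' : ℤ) ∨ (n : ℤ) ∣ i + (i' : ℤ))
    (h : (∀ j : Fin n, memA n i' j → muFace n v i j + muFace n v i j.rev = d) ∨
        (∀ j : Fin n, memB n i' j → muFace n v i j + muFace n v i j.rev = d)) :
    ∀ j, muFace n v i j = muFace n v (-i) j := by
  have hEq := fun j => muFace_eq_neg_iff_of_dvd hv hi hcong j
  have hdual : ∀ j, muFace n v i j + muFace n v i j.rev = d →
      muFace n v i' j = muFace n v (-i') j := fun j hj =>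
    (hEq j).1 (muFace_eq_neg_of_add_rev hv hi hj)
  intro j
  refine (hEq j).2 (muFace_eq_neg_of_eqOn_memA_or_memB hn hv (hi.of_dvd_sub_or_dvd_add hcong)
    hi'le ?_ j)
  exact h.imp (fun h j hj => hdual j (h j hj)) (fun h j hj => hdual j (h j hj))

theorem statement1 (n : ℕ) (hn : 0 < n) (I : Finset ℕ) (hI : I.Nonempty)
    (hIle : ∀ a ∈ I, a ≤ n / 2) (d : ℤ) (v : ℤ → Fin n → ℤ) (hv : IsFace n I d v)
    (i : ℤ) (hi : FaceIdx n I i)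
    (i' : ℕ) (hi'le : i' ≤ n / 2) (hcong : (n : ℤ) ∣ i - (i' : ℤ) ∨ (n : ℤ) ∣ i + (i' : ℤ))
    (h : (∀ j : Fin n, memA n i' j → muFace n v i j + muFace n v i j.rev = d) ∨
        (∀ j : Fin n, memB n i' j → muFace n v i j + muFace n v i j.rev = d)) :
    ∀ j, muFace n v i j = muFace n v (-i) j :=
  statement1_general n hn I d v hv i hi i' hi'le hcong h

end FaceComb
end

section
/- Let v = (v_i)_{i ∈ nℤ ± I} be a 2-face of type (n, I), and let i ∈ I be such that 𝟎 ≤ μ_i^v ≤ 𝟐 entrywise. Then #{ j ∈ {1,…,n} : μ_i^v(j) = 2 and μ_i^v(j*) = 1 } = #{ j ∈ {1,…,n} : μ_i^v(j) = 0 and μ_i^v(j*) = 1 }. -/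
open Finset

namespace FaceComb

/-- Auxiliary doubling lemma: if the level set `{j | f j + f j.rev = c}` splits as the
two rev-symmetric pieces determined by `(a, b)` with `a ≠ b`, its cardinality is twice
that of one piece. -/
lemma double_card (n : ℕ) (f : Fin n → ℤ) (a b c : ℤ) (hab : a ≠ b)
    (hiff : ∀ j : Fin n, f j + f j.rev = c ↔
      (f j = a ∧ f j.rev = b) ∨ (f j = b ∧ f j.rev = a)) :
    (univ.filter fun j : Fin n => f j + f j.rev = c).card
      = 2 * (univ.filter fun j : Fin n => f j = a ∧ f j.rev = b).card := by
  classical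
  have hsplit : (univ.filter fun j : Fin n => f j + f j.rev = c)
      = (univ.filter fun j : Fin n => f j = a ∧ f j.rev = b)
        ∪ (univ.filter fun j : Fin n => f j = b ∧ f j.rev = a) := by
    ext j
    simp only [mem_filter, mem_union, mem_univ, true_and]
    exact hiff j
  have hdisj : Disjoint (univ.filter fun j : Fin n => f j = a ∧ f j.rev = b)
      (univ.filter fun j : Fin n => f j = b ∧ f j.rev = a) := by
    rw [Finset.disjoint_left]
    intro j h1 h2
    simp only [mem_filter] at h1 h2
    exact hab (h1.2.1.symm.trans h2.2.1)
  have hbij : (univ.filter fun j : Fin n => f j = b ∧ f j.rev = a).card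
      = (univ.filter fun j : Fin n => f j = a ∧ f j.rev = b).card := by
    apply Finset.card_bij (fun j _ => j.rev)
    · intro j hj
      simp only [mem_filter, mem_univ, true_and, Fin.rev_rev] at hj ⊢
      exact ⟨hj.2, hj.1⟩
    · intro j₁ _ j₂ _ h
      exact Fin.rev_injective h
    · intro j hj
      refine ⟨j.rev, ?_, Fin.rev_rev j⟩
      simp only [mem_filter, mem_univ, true_and, Fin.rev_rev] at hj ⊢
      exact ⟨hj.2, hj.1⟩
  rw [hsplit, Finset.card_union_of_disjoint hdisj, hbij]
  ring

theorem statement2 (n : ℕ) (hn : 0 < n) (I : Finset ℕ) (hI : I.Nonempty)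
    (hIle : ∀ a ∈ I, a ≤ n / 2) (v : ℤ → Fin n → ℤ) (hv : IsFace n I 2 v)
    (i : ℕ) (hi : i ∈ I)
    (hbound : ∀ j, 0 ≤ muFace n v (i : ℤ) j ∧ muFace n v (i : ℤ) j ≤ 2) :
    Set.ncard {j : Fin n | muFace n v (i : ℤ) j = 2 ∧ muFace n v (i : ℤ) j.rev = 1} =
      Set.ncard {j : Fin n | muFace n v (i : ℤ) j = 0 ∧ muFace n v (i : ℤ) j.rev = 1} := by
  classical
  obtain ⟨per, mono, sumEq, dual⟩ := hv
  have hi2 : i ≤ n / 2 := hIle i hi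
  have hin : i < n := lt_of_le_of_lt hi2 (Nat.div_lt_self hn one_lt_two)
  have h2i : 2 * i ≤ n := by omega
  have hIdx : FaceIdx n I (i : ℤ) := ⟨i, hi, 0, Or.inl (by push_cast; ring)⟩
  have hIdxNeg : FaceIdx n I (-(i : ℤ)) := ⟨i, hi, 0, Or.inr (by push_cast; ring)⟩
  have hIdxN : FaceIdx n I ((n : ℤ) - (i : ℤ)) := ⟨i, hi, 1, Or.inr (by push_cast; ring)⟩
  have hmod : (i : ℤ) % (n : ℤ) = (i : ℤ) :=
    Int.emod_eq_of_lt (by positivity) (by exact_mod_cast hin)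
  have hdiv : (i : ℤ) / (n : ℤ) = 0 :=
    Int.ediv_eq_zero_of_lt (by positivity) (by exact_mod_cast hin)
  have homega : ∀ j : Fin n, omegaVec n (i : ℤ) j = if (j : ℕ) < i then -1 else 0 := by
    intro j
    unfold omegaVec
    rw [hmod, hdiv]
    by_cases h : (j : ℕ) < i
    · rw [if_pos (by exact_mod_cast h), if_pos h]; ring
    · rw [if_neg (by exact_mod_cast h), if_neg h]; ring
  -- sum of v_i
  have hrevsum : ∀ g : Fin n → ℤ, ∑ j, g (Fin.rev j) = ∑ j, g j := by
    intro g
    exact Fintype.sum_bijective Fin.rev Fin.rev_bijective _ _ (fun j => rfl)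
  have hsumv : ∑ j, v (i : ℤ) j = (n : ℤ) - i := by
    have h1 := sumEq (i : ℤ) (-(i : ℤ)) hIdx hIdxNeg
    have h2 : ∑ j, (v (i : ℤ) j + v (-(i : ℤ)) (Fin.rev j)) = 2 * n := by
      rw [Finset.sum_congr rfl (fun j _ => dual (i : ℤ) hIdx j)]
      simp [Finset.card_univ, mul_comm]
    rw [Finset.sum_add_distrib, hrevsum (v (-(i : ℤ)))] at h2
    linarith
  have hsumomega : ∑ j, omegaVec n (i : ℤ) j = -(i : ℤ) := by
    rw [Finset.sum_congr rfl (fun j _ => homega j)]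
    have hcard : (univ.filter fun j : Fin n => (j : ℕ) < i).card = i := by
      have he : (univ.filter fun j : Fin n => (j : ℕ) < i)
          = Finset.Iio (⟨i, hin⟩ : Fin n) := by
        ext j
        simp [Finset.mem_Iio, Fin.lt_def]
      rw [he, Fin.card_Iio]
    calc ∑ j : Fin n, (if (j : ℕ) < i then (-1 : ℤ) else 0)
        = ∑ j ∈ univ.filter (fun j : Fin n => (j : ℕ) < i), (-1 : ℤ) :=
          (Finset.sum_filter _ _).symm
      _ = -(i : ℤ) := by rw [Finset.sum_const, hcard]; simp
  have hsumf : ∑ j, muFace n v (i : ℤ) j = (n : ℤ) := by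
    unfold muFace
    rw [Finset.sum_sub_distrib, hsumv, hsumomega]
    ring
  -- pointwise bounds on s j := μ j + μ j.rev
  have hkey : ∀ j : Fin n, 1 ≤ muFace n v (i : ℤ) j + muFace n v (i : ℤ) j.rev
      ∧ muFace n v (i : ℤ) j + muFace n v (i : ℤ) j.rev ≤ 3 := by
    intro j
    have hd : v (-(i : ℤ)) j + v (i : ℤ) j.rev = 2 := by
      have := dual (-(i : ℤ)) hIdxNeg j
      rwa [neg_neg] at this
    have hm1 : v (i : ℤ) j ≤ v (-(i : ℤ)) j :=
      mono (-(i : ℤ)) (i : ℤ) hIdxNeg hIdx (by have h0 : (0 : ℤ) ≤ (i : ℤ) := Int.natCast_nonneg i; linarith) j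
    have hm2 : v (-(i : ℤ)) j - 1 ≤ v (i : ℤ) j := by
      have hp := per (-(i : ℤ)) hIdxNeg j
      rw [show (-(i : ℤ) + (n : ℤ)) = (n : ℤ) - (i : ℤ) by ring] at hp
      have hm := mono (i : ℤ) ((n : ℤ) - (i : ℤ)) hIdx hIdxN
        (by have : ((2 * i : ℕ) : ℤ) ≤ (n : ℤ) := by exact_mod_cast h2i
            push_cast at this; linarith) j
      linarith
    have hrevval : (j.rev : ℕ) = n - (j + 1) := Fin.val_rev j
    have hωsum : -1 ≤ omegaVec n (i : ℤ) j + omegaVec n (i : ℤ) j.rev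
        ∧ omegaVec n (i : ℤ) j + omegaVec n (i : ℤ) j.rev ≤ 0 := by
      rw [homega j, homega j.rev]
      have hj := j.is_lt
      constructor <;> split_ifs with h1 h2 <;> omega
    have heq : muFace n v (i : ℤ) j + muFace n v (i : ℤ) j.rev
        = 2 + (v (i : ℤ) j - v (-(i : ℤ)) j)
          - (omegaVec n (i : ℤ) j + omegaVec n (i : ℤ) j.rev) := by
      unfold muFace
      linarith [hd]
    constructor <;> rw [heq] <;> linarith [hωsum.1, hωsum.2, hm1, hm2]
  -- sum of s over all j is 2n
  have hsums : ∑ j, (muFace n v (i : ℤ) j + muFace n v (i : ℤ) j.rev) = 2 * n := by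
    rw [Finset.sum_add_distrib, hrevsum (muFace n v (i : ℤ)), hsumf]
    ring
  -- #{s = 3} = #{s = 1}
  have hT : ((univ.filter fun j : Fin n =>
        muFace n v (i : ℤ) j + muFace n v (i : ℤ) j.rev = 3).card : ℤ)
      = ((univ.filter fun j : Fin n =>
        muFace n v (i : ℤ) j + muFace n v (i : ℤ) j.rev = 1).card : ℤ) := by
    have key : ∀ j : Fin n,
        (if muFace n v (i : ℤ) j + muFace n v (i : ℤ) j.rev = 3 then (1 : ℤ) else 0)
          - (if muFace n v (i : ℤ) j + muFace n v (i : ℤ) j.rev = 1 then (1 : ℤ) else 0)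
        = (muFace n v (i : ℤ) j + muFace n v (i : ℤ) j.rev) - 2 := by
      intro j
      have := hkey j
      split_ifs <;> omega
    have hz : ∑ j : Fin n,
        ((if muFace n v (i : ℤ) j + muFace n v (i : ℤ) j.rev = 3 then (1 : ℤ) else 0)
          - (if muFace n v (i : ℤ) j + muFace n v (i : ℤ) j.rev = 1 then (1 : ℤ) else 0))
        = 0 := by
      rw [Finset.sum_congr rfl (fun j _ => key j), Finset.sum_sub_distrib, hsums]
      simp [Finset.card_univ, mul_comm]
    rw [Finset.sum_sub_distrib, Finset.sum_boole, Finset.sum_boole] at hz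
    linarith
  -- doubling on each side
  have hiff3 : ∀ j : Fin n, muFace n v (i : ℤ) j + muFace n v (i : ℤ) j.rev = 3 ↔
      (muFace n v (i : ℤ) j = 2 ∧ muFace n v (i : ℤ) j.rev = 1)
        ∨ (muFace n v (i : ℤ) j = 1 ∧ muFace n v (i : ℤ) j.rev = 2) := by
    intro j
    have h1 := hbound j
    have h2 := hbound j.rev
    omega
  have hiff1 : ∀ j : Fin n, muFace n v (i : ℤ) j + muFace n v (i : ℤ) j.rev = 1 ↔
      (muFace n v (i : ℤ) j = 0 ∧ muFace n v (i : ℤ) j.rev = 1)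
        ∨ (muFace n v (i : ℤ) j = 1 ∧ muFace n v (i : ℤ) j.rev = 0) := by
    intro j
    have h1 := hbound j
    have h2 := hbound j.rev
    omega
  have hd3 := double_card n (muFace n v (i : ℤ)) 2 1 3 (by norm_num) hiff3
  have hd1 := double_card n (muFace n v (i : ℤ)) 0 1 1 (by norm_num) hiff1
  have e2 : {j : Fin n | muFace n v (i : ℤ) j = 2 ∧ muFace n v (i : ℤ) j.rev = 1}
      = ↑(univ.filter fun j : Fin n =>
          muFace n v (i : ℤ) j = 2 ∧ muFace n v (i : ℤ) j.rev = 1) := by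
    ext j; simp
  have e0 : {j : Fin n | muFace n v (i : ℤ) j = 0 ∧ muFace n v (i : ℤ) j.rev = 1}
      = ↑(univ.filter fun j : Fin n =>
          muFace n v (i : ℤ) j = 0 ∧ muFace n v (i : ℤ) j.rev = 1) := by
    ext j; simp
  rw [e2, e0, Set.ncard_coe_finset, Set.ncard_coe_finset]
  omega

end FaceComb
end

section
/- Let w ∈ W̃_{D_m} and 0 ≤ k ≤ m. Suppose μ_k^w satisfies (SP1) at k and is self-dual. Then μ_k^w − μ ∈ Q∨_{D_m} if and only if c_k^w ≡ q (mod 2). -/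
open Finset

namespace TypeD

abbrev VecZ (m : ℕ) := Fin (2 * m) → ℤ
abbrev VecR (m : ℕ) := Fin (2 * m) → ℝ

/-- `σ ∈ S_{2m}^∘`: even, and commuting with `j ↦ j*`. -/
def InSO (m : ℕ) (σ : Equiv.Perm (Fin (2 * m))) : Prop :=
  Equiv.Perm.sign σ = 1 ∧ ∀ j, σ j.rev = (σ j).rev

/-- `t ∈ X_{*D_m}`. -/
def InXD (m : ℕ) (t : VecZ m) : Prop :=
  ∀ j j' : Fin (2 * m), t j + t j.rev = t j' + t j'.rev

/-- `ω_i ∈ ℤ^{2m}`: writing `i = 2m·b + c` with `0 ≤ c < 2m`, the first `c` entries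
are `-b-1` and the rest are `-b`. -/
def omegaD (m : ℕ) (i : ℤ) (j : Fin (2 * m)) : ℤ :=
  if ((j : ℕ) : ℤ) < i % (2 * (m : ℤ)) then -(i / (2 * (m : ℤ))) - 1
  else -(i / (2 * (m : ℤ)))

/-- `μ_k^w = w·ω_k − ω_k` for `w = t_t σ`. -/
def muD (m : ℕ) (t : VecZ m) (σ : Equiv.Perm (Fin (2 * m))) (k : ℤ) (j : Fin (2 * m)) : ℤ :=
  t j + omegaD m k (σ⁻¹ j) - omegaD m k j

/-- `ν_k^w = (μ_k^w + μ_{−k}^w)/2`, real-valued. -/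
noncomputable def nuD (m : ℕ) (t : VecZ m) (σ : Equiv.Perm (Fin (2 * m))) (k : ℤ) (j : Fin (2 * m)) : ℝ :=
  ((muD m t σ k j + muD m t σ (-k) j : ℤ) : ℝ) / 2

/-- `c_k^w = #{j : μ_k^w(j) = 2}`. -/
noncomputable def cD (m : ℕ) (t : VecZ m) (σ : Equiv.Perm (Fin (2 * m))) (k : ℤ) : ℕ :=
  Set.ncard {j : Fin (2 * m) | muD m t σ k j = 2}

/-- the cocharacter `μ = (2^{(q)}, 1^{(2m−2q)}, 0^{(q)})`. -/
def muQ (m q : ℕ) (j : Fin (2 * m)) : ℤ :=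
  if (j : ℕ) < q then 2 else if (j : ℕ) < 2 * m - q then 1 else 0

/-- the coroot lattice `Q∨_{D_m}`. -/
def QveeD (m : ℕ) : Set (VecZ m) :=
  {x | (∀ j, x j + x j.rev = 0) ∧
    Even (∑ j ∈ Finset.univ.filter (fun j : Fin (2 * m) => (j : ℕ) < m), x j)}

/-- `j ∈ A_a` (1-indexed `{1,…,a} ∪ {2m+1−a,…,2m}`). -/
def memA (m a : ℕ) (j : Fin (2 * m)) : Prop := (j : ℕ) < a ∨ 2 * m - a ≤ (j : ℕ)

/-- `j ∈ B_a` (1-indexed `{a+1,…,2m−a}`). -/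
def memB (m a : ℕ) (j : Fin (2 * m)) : Prop := a ≤ (j : ℕ) ∧ (j : ℕ) < 2 * m - a

def IsIntVal (x : ℝ) : Prop := ∃ z : ℤ, x = (z : ℝ)

/-- a half-integer: an element of `(1/2)ℤ ∖ ℤ`. -/
def IsHalfInt (x : ℝ) : Prop := (∃ z : ℤ, x = (z : ℝ) / 2) ∧ ¬ IsIntVal x

/-- `μ_k^w` is self-dual, i.e. `μ_k^w = μ_{−k}^w`. -/
def SelfDual (m : ℕ) (t : VecZ m) (σ : Equiv.Perm (Fin (2 * m))) (k : ℤ) : Prop :=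
  ∀ j, muD m t σ k j = muD m t σ (-k) j

/-- (SP1) at `k`. -/
def SP1 (m : ℕ) (t : VecZ m) (σ : Equiv.Perm (Fin (2 * m))) (k : ℤ) : Prop :=
  (∀ j, muD m t σ k j + muD m t σ (-k) j.rev = 2) ∧
  (∀ j, 0 ≤ muD m t σ k j ∧ muD m t σ k j ≤ 2)

/-- (SP2) at `k`. -/
def SP2 (m q : ℕ) (t : VecZ m) (σ : Equiv.Perm (Fin (2 * m))) (k : ℤ) : Prop :=
  cD m t σ k ≤ q

/-- (SP3) at `k`. -/
def SP3 (m q : ℕ) (t : VecZ m) (σ : Equiv.Perm (Fin (2 * m))) (k : ℕ) : Prop :=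
  (SelfDual m t σ (k : ℤ) ∧ (fun j => muD m t σ (k : ℤ) j - muQ m q j) ∉ QveeD m) →
    ∃ j₁ j₂ : Fin (2 * m), memA m k j₁ ∧ memB m k j₂ ∧
      muD m t σ (k : ℤ) j₁ = 1 ∧ muD m t σ (k : ℤ) j₂ = 1

/-- (SP1') at `k`. -/
def SP1' (m : ℕ) (t : VecZ m) (σ : Equiv.Perm (Fin (2 * m))) (k : ℤ) : Prop :=
  (∀ j, nuD m t σ k j + nuD m t σ k j.rev = 2) ∧
  (∀ j, 0 ≤ nuD m t σ k j ∧ nuD m t σ k j ≤ 2)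

/-- (SP2') at `k`. -/
def SP2' (m q : ℕ) (t : VecZ m) (σ : Equiv.Perm (Fin (2 * m))) (k : ℤ) : Prop :=
  (Set.ncard {j : Fin (2 * m) | nuD m t σ k j = 2} : ℝ) +
    (Set.ncard {j : Fin (2 * m) | ¬ IsIntVal (nuD m t σ k j)} : ℝ) / 4 ≤ (q : ℝ)

/-- `ν_k^w − μ ∈ Q∨_{D_m}`. -/
def NuCongQvee (m q : ℕ) (t : VecZ m) (σ : Equiv.Perm (Fin (2 * m))) (k : ℤ) : Prop :=
  ∃ y ∈ QveeD m, ∀ j, nuD m t σ k j = ((muQ m q j + y j : ℤ) : ℝ)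

/-- (SP3') at `k`. -/
def SP3' (m q : ℕ) (t : VecZ m) (σ : Equiv.Perm (Fin (2 * m))) (k : ℕ) : Prop :=
  ((∀ j, IsIntVal (nuD m t σ (k : ℤ) j)) ∧ ¬ NuCongQvee m q t σ (k : ℤ)) →
    ∃ j₁ j₂ : Fin (2 * m), memA m k j₁ ∧ memB m k j₂ ∧
      nuD m t σ (k : ℤ) j₁ = 1 ∧ nuD m t σ (k : ℤ) j₂ = 1

/-- the orbit `S_{2m}^∘ · μ` inside `ℝ^{2m}`. -/
def OrbitMu (m q : ℕ) : Set (VecR m) :=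
  {x | ∃ σ : Equiv.Perm (Fin (2 * m)), InSO m σ ∧ ∀ j, x j = ((muQ m q (σ⁻¹ j) : ℤ) : ℝ)}

/-- `Conv(S_{2m}^∘ · μ)`. -/
def ConvMu (m q : ℕ) : Set (VecR m) := convexHull ℝ (OrbitMu m q)

/-- the affine action of `w = t_t σ` on `ℝ^{2m}`. -/
noncomputable def actR (m : ℕ) (t : VecZ m) (σ : Equiv.Perm (Fin (2 * m))) (x : VecR m) (j : Fin (2 * m)) : ℝ :=
  (t j : ℝ) + x (σ⁻¹ j)

/-- the point `a_k = ((−1/2)^{(k)}, 0^{(2m−2k)}, (1/2)^{(k)})`. -/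
noncomputable def aD (m k : ℕ) (j : Fin (2 * m)) : ℝ :=
  if (j : ℕ) < k then -(1 / 2) else if (j : ℕ) < 2 * m - k then 0 else 1 / 2

/-- the point `a_{0'} = (−1, 0^{(2m−2)}, 1)`. -/
noncomputable def a0' (m : ℕ) (j : Fin (2 * m)) : ℝ :=
  if (j : ℕ) = 0 then -1 else if (j : ℕ) = 2 * m - 1 then 1 else 0

/-- the point `a_{m'} = ((−1/2)^{(m−1)}, 1/2, −1/2, (1/2)^{(m−1)})`. -/
noncomputable def am' (m : ℕ) (j : Fin (2 * m)) : ℝ :=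
  if (j : ℕ) < m - 1 then -(1 / 2)
  else if (j : ℕ) = m - 1 then 1 / 2
  else if (j : ℕ) = m then -(1 / 2)
  else 1 / 2

/-- `ν_{0'}^w = w·a_{0'} − a_{0'}`. -/
noncomputable def nu0' (m : ℕ) (t : VecZ m) (σ : Equiv.Perm (Fin (2 * m))) (j : Fin (2 * m)) : ℝ :=
  actR m t σ (a0' m) j - a0' m j

/-- `ν_{m'}^w = w·a_{m'} − a_{m'}`. -/
noncomputable def num' (m : ℕ) (t : VecZ m) (σ : Equiv.Perm (Fin (2 * m))) (j : Fin (2 * m)) : ℝ :=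
  actR m t σ (am' m) j - am' m j

/-- membership in the real apartment `{x : x(1)+x(2m) = ⋯ = x(m)+x(m+1)}`. -/
def InApartR (m : ℕ) (x : VecR m) : Prop :=
  ∀ j j' : Fin (2 * m), x j + x j.rev = x j' + x j'.rev

/-- membership in the base alcove `A_{D_m}`. -/
def InAlcove (m : ℕ) (x : VecR m) : Prop :=
  InApartR m x ∧
  (∀ j0 jt : Fin (2 * m), (j0 : ℕ) = 0 → 1 ≤ (jt : ℕ) → (jt : ℕ) ≤ m →
    x j0 < x jt ∧ x j0.rev - 1 < x jt) ∧
  (∀ j j' : Fin (2 * m), 1 ≤ (j : ℕ) → (j : ℕ) ≤ m - 2 → (j : ℕ) < (j' : ℕ) →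
    (j' : ℕ) ≤ m → x j < x j')

/-- `w = t_t σ` is μ-permissible: `w ≡ t_μ mod W_{aff}` (equivalently
`ν_0^w − μ ∈ Q∨_{D_m}`) and `w·x − x ∈ Conv(S_{2m}^∘ μ)` for all `x` in the base alcove. -/
def MuPermissible (m q : ℕ) (t : VecZ m) (σ : Equiv.Perm (Fin (2 * m))) : Prop :=
  NuCongQvee m q t σ 0 ∧
  ∀ x : VecR m, InAlcove m x → (fun j => actR m t σ x j - x j) ∈ ConvMu m q

/-- the coroot `α∨_{i,j} = e_i − e_j + e_{j*} − e_{i*}`. -/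
def corootD (m : ℕ) (i j l : Fin (2 * m)) : ℤ :=
  (if l = i then 1 else 0) - (if l = j then 1 else 0) +
    (if l = j.rev then 1 else 0) - (if l = i.rev then 1 else 0)

/-- `(t', σ')` represents `s_{α̃_{i,j;d}} · w` for `w = t_t σ`: on the apartment it
acts by `x ↦ w·x − ⟨α̃_{i,j;d}, w·x⟩ α∨_{i,j}`. -/
def IsReflOf (m : ℕ) (i j : Fin (2 * m)) (d : ℤ) (t : VecZ m) (σ : Equiv.Perm (Fin (2 * m)))
    (t' : VecZ m) (σ' : Equiv.Perm (Fin (2 * m))) : Prop :=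
  ∀ x : VecR m, InApartR m x → ∀ l,
    actR m t' σ' x l =
      actR m t σ x l - (actR m t σ x i - actR m t σ x j - (d : ℝ)) * (corootD m i j l : ℝ)

/-- Membership of `i` in `2mℤ ± I`. -/
def FaceIdxD (m : ℕ) (I : Finset ℕ) (i : ℤ) : Prop :=
  ∃ a ∈ I, ∃ b : ℤ, i = 2 * (m : ℤ) * b + (a : ℤ) ∨ i = 2 * (m : ℤ) * b - (a : ℤ)

/-- `v` is a `d`-face of type `(2m, I)`. -/
structure IsFaceD (m : ℕ) (I : Finset ℕ) (d : ℤ) (v : ℤ → VecZ m) : Prop where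
  per : ∀ i, FaceIdxD m I i → ∀ j, v (i + 2 * (m : ℤ)) j = v i j - 1
  mono : ∀ i i', FaceIdxD m I i → FaceIdxD m I i' → i ≤ i' → ∀ j, v i' j ≤ v i j
  sumEq : ∀ i i', FaceIdxD m I i → FaceIdxD m I i' → (∑ j, v i j) - (∑ j, v i' j) = i' - i
  dual : ∀ i, FaceIdxD m I i → ∀ j, v i j + v (-i) j.rev = d

/-- `μ_i^v := v_i − ω_i` for a face `v`. -/
def muFaceD (m : ℕ) (v : ℤ → VecZ m) (i : ℤ) (j : Fin (2 * m)) : ℤ := v i j - omegaD m i j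

/-- `ε` of a translation vector: the sum of the first `m` entries mod 2. -/
def epsVec (m : ℕ) (x : VecZ m) : ZMod 2 :=
  ((∑ j ∈ Finset.univ.filter (fun j : Fin (2 * m) => (j : ℕ) < m), x j : ℤ) : ZMod 2)

/-- membership of `(v, γ)` in `F_{I,D_m}`. -/
def MemFD (m : ℕ) (I : Finset ℕ) (v : ℤ → VecZ m) (γ : ZMod 2) : Prop :=
  (∃ d, IsFaceD m I d v) ∧
  (if 0 ∈ I then
    if m ∈ I then
      (fun j => muFaceD m v 0 j - muFaceD m v (m : ℤ) j) ∈ QveeD m ∧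
        γ = epsVec m (fun j => muFaceD m v 0 j)
    else γ = epsVec m (fun j => muFaceD m v 0 j)
  else if m ∈ I then γ = epsVec m (fun j => muFaceD m v (m : ℤ) j)
  else True)

/-- membership of `t_tx σx` in `W_{I,D_m}` (the group conditions on `(tx, σx)` being
assumed separately): it lies in `W_{aff,D_m}` and fixes `a_k` for all `k ∈ I`. -/
def MemWI (m : ℕ) (I : Finset ℕ) (tx : VecZ m) (σx : Equiv.Perm (Fin (2 * m))) : Prop :=
  tx ∈ QveeD m ∧ ∀ k ∈ I, ∀ j, (tx j : ℝ) + aD m k (σx⁻¹ j) = aD m k j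

/-- (SP1) at `k` for a face. -/
def SP1F (m : ℕ) (v : ℤ → VecZ m) (k : ℕ) : Prop :=
  (∀ j, muFaceD m v (k : ℤ) j + muFaceD m v (-(k : ℤ)) j.rev = 2) ∧
  (∀ j, 0 ≤ muFaceD m v (k : ℤ) j ∧ muFaceD m v (k : ℤ) j ≤ 2)

/-- (SP2) at `k` for a face. -/
def SP2F (m q : ℕ) (v : ℤ → VecZ m) (k : ℕ) : Prop :=
  Set.ncard {j : Fin (2 * m) | muFaceD m v (k : ℤ) j = 2} ≤ q

/-- (SP3) at `k` for a face. -/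
def SP3F (m q : ℕ) (v : ℤ → VecZ m) (k : ℕ) : Prop :=
  ((∀ j, muFaceD m v (k : ℤ) j = muFaceD m v (-(k : ℤ)) j) ∧
      (fun j => muFaceD m v (k : ℤ) j - muQ m q j) ∉ QveeD m) →
    ∃ j₁ j₂ : Fin (2 * m), memA m k j₁ ∧ memB m k j₂ ∧
      muFaceD m v (k : ℤ) j₁ = 1 ∧ muFaceD m v (k : ℤ) j₂ = 1

/-- `(v, γ) ∈ F_{I,D_m}` is μ-spin-permissible. -/
def SpinPermF (m q : ℕ) (I : Finset ℕ) (v : ℤ → VecZ m) (γ : ZMod 2) : Prop :=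
  γ = epsVec m (fun j => muQ m q j) ∧ ∀ k ∈ I, SP1F m v k ∧ SP2F m q v k ∧ SP3F m q v k


lemma card_filter_val_lt (n a : ℕ) (h : a < n) :
    ((Finset.univ : Finset (Fin n)).filter (fun j : Fin n => (j : ℕ) < a)).card = a := by
  have he : (Finset.univ : Finset (Fin n)).filter (fun j : Fin n => (j : ℕ) < a)
      = Finset.Iio (⟨a, h⟩ : Fin n) := by
    ext j
    simp [Fin.lt_def]
  rw [he, Fin.card_Iio]

theorem statement4 (m q : ℕ) (hm : 2 ≤ m) (hq : q ≤ m - 1)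
    (t : VecZ m) (σ : Equiv.Perm (Fin (2 * m))) (ht : InXD m t) (hσ : InSO m σ)
    (k : ℕ) (hk : k ≤ m)
    (h1 : SP1 m t σ (k : ℤ)) (hsd : SelfDual m t σ (k : ℤ)) :
    (fun j => muD m t σ (k : ℤ) j - muQ m q j) ∈ QveeD m ↔
      cD m t σ (k : ℤ) % 2 = q % 2 := by
  classical
  have hqm : q < m := by omega
  set μj : Fin (2 * m) → ℤ := muD m t σ (k : ℤ) with hμdef
  have hpair : ∀ j : Fin (2 * m), μj j + μj j.rev = 2 := by
    intro j
    have h := h1.1 j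
    rw [← hsd j.rev] at h
    exact h
  have hrange : ∀ j : Fin (2 * m), 0 ≤ μj j ∧ μj j ≤ 2 := h1.2
  have hrev : ∀ j : Fin (2 * m), (j.rev : ℕ) = 2 * m - ((j : ℕ) + 1) := fun j => Fin.val_rev j
  have hmuQpair : ∀ j : Fin (2 * m), muQ m q j + muQ m q j.rev = 2 := by
    intro j
    have hj := j.isLt
    have hjr := hrev j
    unfold muQ
    split_ifs <;> omega
  have hcond1 : ∀ j : Fin (2 * m),
      (μj j - muQ m q j) + (μj j.rev - muQ m q j.rev) = 0 := by
    intro j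
    have h2 := hpair j
    have h3 := hmuQpair j
    omega
  set F : Finset (Fin (2 * m)) :=
    Finset.univ.filter (fun j : Fin (2 * m) => (j : ℕ) < m) with hF
  have hFcard : F.card = m := card_filter_val_lt (2 * m) m (by omega)
  set a2 := (F.filter (fun j => μj j = 2)).card with ha2
  set a1 := (F.filter (fun j => μj j = 1)).card with ha1
  set a0 := (F.filter (fun j => μj j = 0)).card with ha0
  -- partition of F
  have hp1 : (F.filter (fun j => μj j = 2)).card
      + (F.filter (fun j => ¬ μj j = 2)).card = F.card :=
    Finset.card_filter_add_card_filter_not _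
  have hp2 : ((F.filter (fun j => ¬ μj j = 2)).filter (fun j => μj j = 1)).card
      + ((F.filter (fun j => ¬ μj j = 2)).filter (fun j => ¬ μj j = 1)).card
      = (F.filter (fun j => ¬ μj j = 2)).card :=
    Finset.card_filter_add_card_filter_not _
  have he1 : (F.filter (fun j => ¬ μj j = 2)).filter (fun j => μj j = 1)
      = F.filter (fun j => μj j = 1) := by
    ext j
    have h0 := hrange j
    simp only [Finset.mem_filter, hF, Finset.mem_univ, true_and]
    omega
  have he0 : (F.filter (fun j => ¬ μj j = 2)).filter (fun j => ¬ μj j = 1)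
      = F.filter (fun j => μj j = 0) := by
    ext j
    have h0 := hrange j
    simp only [Finset.mem_filter, hF, Finset.mem_univ, true_and]
    omega
  rw [he1, he0] at hp2
  have hsum012 : a0 + a1 + a2 = m := by
    rw [ha0, ha1, ha2]
    omega
  -- the count of 2's
  have hc : cD m t σ (k : ℤ) = (Finset.univ.filter (fun j => μj j = 2)).card := by
    rw [cD, Set.ncard_eq_toFinset_card']
    congr 1
    ext j
    simp [hμdef]
  have hsplitc : (Finset.univ.filter (fun j => μj j = 2)).card
      = ((Finset.univ.filter (fun j => μj j = 2)).filter (fun j : Fin (2 * m) => (j : ℕ) < m)).card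
      + ((Finset.univ.filter (fun j => μj j = 2)).filter (fun j : Fin (2 * m) => ¬ (j : ℕ) < m)).card :=
    (Finset.card_filter_add_card_filter_not _).symm
  have hcomm : (Finset.univ.filter (fun j => μj j = 2)).filter (fun j : Fin (2 * m) => (j : ℕ) < m)
      = F.filter (fun j => μj j = 2) := by
    ext j
    simp only [Finset.mem_filter, hF, Finset.mem_univ, true_and]
    tauto
  have hbij : ((Finset.univ.filter (fun j => μj j = 2)).filter
        (fun j : Fin (2 * m) => ¬ (j : ℕ) < m)).card
      = (F.filter (fun j => μj j = 0)).card := by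
    refine Finset.card_bij' (fun j _ => j.rev) (fun j _ => j.rev) ?_ ?_ ?_ ?_
    · intro a ha
      simp only [Finset.mem_filter, Finset.mem_univ, true_and] at ha
      have h2 := hpair a
      have hra := hrev a
      have hia := a.isLt
      have hirev := a.rev.isLt
      simp only [Finset.mem_filter, hF, Finset.mem_univ, true_and]
      omega
    · intro a ha
      simp only [Finset.mem_filter, hF, Finset.mem_univ, true_and] at ha
      have h2 := hpair a
      have hra := hrev a
      have hia := a.isLt
      simp only [Finset.mem_filter, Finset.mem_univ, true_and]
      omega
    · intro a _
      exact Fin.rev_rev a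
    · intro a _
      exact Fin.rev_rev a
  have hcval : cD m t σ (k : ℤ) = a2 + a0 := by
    rw [hc, hsplitc, hcomm, hbij, ha2, ha0]
  -- sums
  have hS : (∑ j ∈ F, μj j) = (a1 : ℤ) + 2 * a2 := by
    have hstep : (∑ j ∈ F, μj j)
        = ∑ j ∈ F, ((if μj j = 1 then (1 : ℤ) else 0) + (if μj j = 2 then (2 : ℤ) else 0)) := by
      refine Finset.sum_congr rfl (fun j _ => ?_)
      have h0 := hrange j
      split_ifs <;> omega
    rw [hstep, Finset.sum_add_distrib, ← Finset.sum_filter, ← Finset.sum_filter,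
      Finset.sum_const, Finset.sum_const, ← ha1, ← ha2]
    push_cast
    ring
  have hTQ : (∑ j ∈ F, muQ m q j) = (m : ℤ) + q := by
    have hstep : (∑ j ∈ F, muQ m q j)
        = ∑ j ∈ F, ((1 : ℤ) + (if (j : ℕ) < q then (1 : ℤ) else 0)) := by
      refine Finset.sum_congr rfl (fun j hj => ?_)
      rw [hF, Finset.mem_filter] at hj
      have hjm := hj.2
      unfold muQ
      split_ifs <;> omega
    have hq2 : F.filter (fun j : Fin (2 * m) => (j : ℕ) < q)
        = Finset.univ.filter (fun j : Fin (2 * m) => (j : ℕ) < q) := by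
      ext j
      simp only [Finset.mem_filter, hF, Finset.mem_univ, true_and]
      omega
    rw [hstep, Finset.sum_add_distrib, ← Finset.sum_filter, hq2,
      Finset.sum_const, Finset.sum_const, card_filter_val_lt (2 * m) q (by omega), hFcard]
    push_cast
    ring
  have hmem : (fun j => muD m t σ (k : ℤ) j - muQ m q j) ∈ QveeD m ↔
      Even (∑ j ∈ F, (μj j - muQ m q j)) := by
    constructor
    · intro h
      exact h.2
    · intro h
      exact ⟨fun j => hcond1 j, h⟩
  rw [hmem, Finset.sum_sub_distrib, hS, hTQ, hcval, Int.even_iff]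
  omega


end TypeD
end

section
/- Let w = t_v σ ∈ W̃_{D_m} and 1 ≤ k ≤ m, and suppose that μ_k^w and μ_{k−1}^w both satisfy (SP1). Then c_k^w = c_{k−1}^w + u(k) − u(σ(k)). -/
open Finset

namespace TypeD

/-!
Entries are 0-indexed, so the paper's `k` is `k - 1` below. For `0 ≤ l ≤ 2m`,
`μ_l^w(j) = t(j) + [j < l] - [σ⁻¹ j < l]`; hence `μ_k^w = μ_{k-1}^w + e_{k-1} - e_{σ(k-1)}` and
`u(j) = t(j) + [j < σ⁻¹ j]`. Since all entries of `μ_k^w` and `μ_{k-1}^w` lie in `[0, 2]`, raising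
one entry and lowering another by one changes the number of entries equal to `2` by
`μ_k^w(k-1) - μ_{k-1}^w(σ(k-1))`, and this is `u(k-1) - u(σ(k-1))`.
-/

section Formulas

variable {m : ℕ} {t : VecZ m} {σ : Equiv.Perm (Fin (2 * m))}

lemma omegaD_natCast_of_le {l : ℕ} (hl : l ≤ 2 * m) (j : Fin (2 * m)) :
    omegaD m l j = -(if (j : ℕ) < l then 1 else 0) := by
  have hj := j.isLt
  rcases hl.lt_or_eq with hl | rfl
  · have hmod : (l : ℤ) % (2 * (m : ℤ)) = l := Int.emod_eq_of_lt (by omega) (by omega)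
    have hdiv : (l : ℤ) / (2 * (m : ℤ)) = 0 := Int.ediv_eq_zero_of_lt (by omega) (by omega)
    unfold omegaD
    rw [hmod, hdiv]
    split_ifs <;> omega
  · have hcast : ((2 * m : ℕ) : ℤ) = 2 * (m : ℤ) := by push_cast; ring
    unfold omegaD
    rw [hcast, Int.emod_self, Int.ediv_self (by omega)]
    split_ifs <;> omega

lemma muD_natCast_of_le {l : ℕ} (hl : l ≤ 2 * m) (j : Fin (2 * m)) :
    muD m t σ l j =
      t j + (if (j : ℕ) < l then 1 else 0) - (if ((σ⁻¹ j : Fin (2 * m)) : ℕ) < l then 1 else 0) := by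
  rw [muD, omegaD_natCast_of_le hl, omegaD_natCast_of_le hl]
  ring

lemma muD_succ (i : Fin (2 * m)) :
    muD m t σ ((i : ℕ) + 1 : ℕ) = muD m t σ (i : ℕ) + Pi.single i 1 - Pi.single (σ i) 1 := by
  funext j
  have hσj : σ⁻¹ j = i ↔ j = σ i := by rw [Equiv.Perm.inv_eq_iff_eq, eq_comm]
  simp only [Pi.add_apply, Pi.sub_apply, Pi.single_apply, ← hσj, Fin.ext_iff]
  rw [muD_natCast_of_le (by omega), muD_natCast_of_le (by omega)]
  split_ifs <;> omega

lemma isGreatest_muD (j : Fin (2 * m)) :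
    IsGreatest {x : ℤ | ∃ l : ℕ, l ≤ 2 * m ∧ x = muD m t σ (l : ℤ) j}
      (t j + if (j : ℕ) < ((σ⁻¹ j : Fin (2 * m)) : ℕ) then 1 else 0) := by
  have hj := j.isLt
  refine ⟨?_, ?_⟩
  · by_cases hlt : (j : ℕ) < ((σ⁻¹ j : Fin (2 * m)) : ℕ)
    · refine ⟨j + 1, by omega, ?_⟩
      rw [muD_natCast_of_le (by omega)]
      split_ifs <;> omega
    · refine ⟨0, by omega, ?_⟩
      rw [muD_natCast_of_le (by omega)]
      split_ifs <;> omega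
  · rintro x ⟨l, hl, rfl⟩
    rw [muD_natCast_of_le hl]
    split_ifs <;> omega

end Formulas

lemma ncard_eq_two_sub_ncard_eq_two {ι : Type*} [Fintype ι] [DecidableEq ι] {f g : ι → ℤ}
    {a b : ι} (hfg : f = g + Pi.single a 1 - Pi.single b 1)
    (hf : ∀ j, 0 ≤ f j ∧ f j ≤ 2) (hg : ∀ j, 0 ≤ g j ∧ g j ≤ 2) :
    ({j | f j = 2}.ncard : ℤ) - {j | g j = 2}.ncard = f a - g b := by
  rcases eq_or_ne a b with rfl | hab
  · obtain rfl : f = g := by simpa using hfg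
    simp
  have hfa : f a = g a + 1 := by simp [hfg, hab]
  have hfb : f b = g b - 1 := by simp [hfg, hab.symm]
  have hfj : ∀ j, j ≠ a → j ≠ b → f j = g j := fun j hja hjb => by simp [hfg, hja, hjb]
  simp only [Set.ncard_eq_toFinset_card', Set.toFinset_ofPred, Finset.card_filter]
  push_cast
  rw [← Finset.sum_sub_distrib,
    Fintype.sum_eq_add a b hab fun j ⟨hja, hjb⟩ => by rw [hfj j hja hjb, sub_self]]
  obtain ⟨-, hfa₂⟩ := hf a
  obtain ⟨hfb₀, -⟩ := hf b
  obtain ⟨hga₀, -⟩ := hg a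
  obtain ⟨-, hgb₂⟩ := hg b
  split_ifs <;> omega

theorem statement5 (m : ℕ)
    (t : VecZ m) (σ : Equiv.Perm (Fin (2 * m)))
    (u : Fin (2 * m) → ℤ)
    (hu : ∀ j, IsGreatest {x : ℤ | ∃ l : ℕ, l ≤ 2 * m ∧ x = muD m t σ (l : ℤ) j} (u j))
    (k : ℕ) (hk1 : 1 ≤ k) (hk2 : k ≤ m)
    (h1 : SP1 m t σ (k : ℤ)) (h1' : SP1 m t σ ((k : ℤ) - 1)) :
    (cD m t σ (k : ℤ) : ℤ) =
      (cD m t σ ((k : ℤ) - 1) : ℤ) + u ⟨k - 1, by omega⟩ - u (σ ⟨k - 1, by omega⟩) := by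
  set i : Fin (2 * m) := ⟨k - 1, by omega⟩
  have hk : k = (i : ℕ) + 1 := by simp only [i]; omega
  have hk' : (k : ℤ) - 1 = ((i : ℕ) : ℤ) := by simp only [i]; omega
  rw [hk'] at h1' ⊢
  rw [hk] at h1 ⊢
  have hcount := ncard_eq_two_sub_ncard_eq_two (muD_succ i) h1.2 h1'.2
  rw [(hu i).unique (isGreatest_muD i), (hu (σ i)).unique (isGreatest_muD (σ i)), cD, cD]
  rw [muD_natCast_of_le (by omega), muD_natCast_of_le (by omega)] at hcount
  simp only [Equiv.Perm.coe_inv, Equiv.symm_apply_apply] at hcount ⊢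
  split_ifs at hcount ⊢ <;> omega

end TypeD
end

section
/- Let w ∈ W̃_{D_m} and 0 ≤ i < p ≤ m, and suppose that μ_i^w and μ_p^w both satisfy (SP1). (i) If c_i^w < c_p^w, then there exists j ∈ {i+1,…,p} such that μ_i^w(j) = 1 and μ_p^w(j) = 2. (ii) If c_i^w > c_p^w, then there exists j ∈ {i+1,…,p} such that μ_i^w(j) = 0 and μ_p^w(j) = 1. -/
open Finset

namespace TypeD

lemma omegaD_small (m : ℕ) (k : ℕ) (hk : k < 2 * m) (j : Fin (2 * m)) :
    omegaD m (k : ℤ) j = if (j : ℕ) < k then -1 else 0 := by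
  have h1 : (k : ℤ) % (2 * (m : ℤ)) = k := by
    apply Int.emod_eq_of_lt (by positivity)
    exact_mod_cast hk
  have h2 : (k : ℤ) / (2 * (m : ℤ)) = 0 := by
    apply Int.ediv_eq_zero_of_lt (by positivity)
    exact_mod_cast hk
  rw [omegaD, h1, h2]
  split <;> split <;> omega

lemma muD_diff (m : ℕ) (t : VecZ m) (σ : Equiv.Perm (Fin (2 * m)))
    (i p : ℕ) (hip : i ≤ p) (hi : i < 2 * m) (hp : p < 2 * m) (j : Fin (2 * m)) :
    muD m t σ (p : ℤ) j - muD m t σ (i : ℤ) j =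
      (if i ≤ (j : ℕ) ∧ (j : ℕ) < p then 1 else 0) -
        (if i ≤ ((σ⁻¹ j : Fin (2 * m)) : ℕ) ∧ ((σ⁻¹ j : Fin (2 * m)) : ℕ) < p then 1 else 0) := by
  simp only [muD, omegaD_small m i hi, omegaD_small m p hp]
  split_ifs <;> omega

lemma cD_eq_card (m : ℕ) (t : VecZ m) (σ : Equiv.Perm (Fin (2 * m))) (k : ℤ) :
    cD m t σ k = (Finset.univ.filter (fun j => muD m t σ k j = 2)).card := by
  rw [cD, ← Set.ncard_coe_finset]
  congr 1
  ext j
  simp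

lemma muD_sum (m : ℕ) (t : VecZ m) (σ : Equiv.Perm (Fin (2 * m))) (k : ℤ) :
    ∑ j, muD m t σ k j = ∑ j, t j := by
  simp only [muD]
  rw [Finset.sum_sub_distrib, Finset.sum_add_distrib]
  rw [Equiv.sum_comp σ⁻¹ (omegaD m k)]
  ring

lemma muD_sum_decomp (m : ℕ) (t : VecZ m) (σ : Equiv.Perm (Fin (2 * m))) (k : ℤ)
    (hb : ∀ j, 0 ≤ muD m t σ k j ∧ muD m t σ k j ≤ 2) :
    ∑ j, muD m t σ k j = (2 * m : ℤ) +
      ((Finset.univ.filter (fun j => muD m t σ k j = 2)).card : ℤ) -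
      ((Finset.univ.filter (fun j => muD m t σ k j = 0)).card : ℤ) := by
  have h : ∀ j : Fin (2 * m), muD m t σ k j =
      1 + (if muD m t σ k j = 2 then (1:ℤ) else 0) - (if muD m t σ k j = 0 then (1:ℤ) else 0) := by
    intro j
    have := hb j
    split_ifs <;> omega
  rw [Finset.sum_congr rfl (fun j _ => h j)]
  rw [Finset.sum_sub_distrib, Finset.sum_add_distrib]
  simp [Finset.sum_boole, Finset.card_univ]

theorem statement6 (m : ℕ) (hm : 2 ≤ m)
    (t : VecZ m) (σ : Equiv.Perm (Fin (2 * m))) (ht : InXD m t) (hσ : InSO m σ)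
    (i p : ℕ) (hip : i < p) (hp : p ≤ m)
    (h1 : SP1 m t σ (i : ℤ)) (h2 : SP1 m t σ (p : ℤ)) :
    (cD m t σ (i : ℤ) < cD m t σ (p : ℤ) →
      ∃ j : Fin (2 * m), i ≤ (j : ℕ) ∧ (j : ℕ) < p ∧
        muD m t σ (i : ℤ) j = 1 ∧ muD m t σ (p : ℤ) j = 2) ∧
    (cD m t σ (p : ℤ) < cD m t σ (i : ℤ) →
      ∃ j : Fin (2 * m), i ≤ (j : ℕ) ∧ (j : ℕ) < p ∧
        muD m t σ (i : ℤ) j = 0 ∧ muD m t σ (p : ℤ) j = 1) := by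
  have hi2m : i < 2 * m := by omega
  have hp2m : p < 2 * m := by omega
  have hdiff := muD_diff m t σ i p (le_of_lt hip) hi2m hp2m
  constructor
  · intro hc
    rw [cD_eq_card, cD_eq_card] at hc
    have hns : ¬ (Finset.univ.filter (fun j => muD m t σ (p : ℤ) j = 2)) ⊆
        (Finset.univ.filter (fun j => muD m t σ (i : ℤ) j = 2)) :=
      fun h => absurd (Finset.card_le_card h) (by omega)
    obtain ⟨j, hjA, hjB⟩ := Finset.not_subset.mp hns
    simp only [Finset.mem_filter, Finset.mem_univ, true_and] at hjA hjB
    have hbi := h1.2 j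
    have hd := hdiff j
    refine ⟨j, ?_, ?_, ?_, hjA⟩ <;> rw [hjA] at hd <;>
      split_ifs at hd with ha hb <;> omega
  · intro hc
    rw [cD_eq_card, cD_eq_card] at hc
    have hsum : ∑ j, muD m t σ (i : ℤ) j = ∑ j, muD m t σ (p : ℤ) j := by
      rw [muD_sum, muD_sum]
    rw [muD_sum_decomp m t σ (i : ℤ) h1.2, muD_sum_decomp m t σ (p : ℤ) h2.2] at hsum
    have hc0 : (Finset.univ.filter (fun j => muD m t σ (p : ℤ) j = 0)).card <
        (Finset.univ.filter (fun j => muD m t σ (i : ℤ) j = 0)).card := by omega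
    have hns : ¬ (Finset.univ.filter (fun j => muD m t σ (i : ℤ) j = 0)) ⊆
        (Finset.univ.filter (fun j => muD m t σ (p : ℤ) j = 0)) :=
      fun h => absurd (Finset.card_le_card h) (by omega)
    obtain ⟨j, hjA, hjB⟩ := Finset.not_subset.mp hns
    simp only [Finset.mem_filter, Finset.mem_univ, true_and] at hjA hjB
    have hbp := h2.2 j
    have hd := hdiff j
    refine ⟨j, ?_, ?_, hjA, ?_⟩ <;> rw [hjA] at hd <;>
      split_ifs at hd with ha hb <;> omega

end TypeD
end

section
/- Let w ∈ W̃_{D_m} and 0 ≤ k ≤ m, and suppose μ_k^w satisfies (SP1). Then c_k^w = #{j : ν_k^w(j) = 2} + #{j : ν_k^w(j) ∉ ℤ}/4 = #{j : ν_k^w(j) = 0} + #{j : ν_k^w(j) ∉ ℤ}/4. -/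
/-!
Write `μ = μ_k^w` and `w = t_t σ`. Since `ω_{-i}(j) = -ω_i(j*)` and `σ` commutes with `j ↦ j*`,
`μ_i(j) + μ_{-i}(j*) = t(j) + t(j*)`, so the first half of (SP1) says `t(j) + t(j*) = 2`.
Hence `Σ μ = Σ t = 2m`, and since for `k ≤ m` the vector `ω_k` is `-1` on at most one of `l, l*`
and `0` otherwise, `1 ≤ μ(j) + μ(j*) ≤ 3`. As `ν(j) = 1 + (μ(j) - μ(j*))/2`, both identities only
depend on the pairs `(μ(j), μ(j*))`; after symmetrising under `j ↦ j*` they hold termwise up to a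
multiple of `μ(j) - 1`, whose sum vanishes.
-/

open Finset

namespace TypeD

section Involution

variable {α : Type*} [Fintype α] {r : α → α}

theorem sum_eq_sum_of_add_comp_eq (hr : Function.Involutive r) {f g : α → ℤ}
    (h : ∀ j, f j + f (r j) = g j + g (r j)) : ∑ j, f j = ∑ j, g j := by
  have hf : ∑ j, f (r j) = ∑ j, f j := Equiv.sum_comp (hr.toPerm r) f
  have hg : ∑ j, g (r j) = ∑ j, g j := Equiv.sum_comp (hr.toPerm r) g
  have hsum : ∑ j, (f j + f (r j)) = ∑ j, (g j + g (r j)) := sum_congr rfl fun j _ => h j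
  rw [sum_add_distrib, sum_add_distrib, hf, hg] at hsum
  omega

theorem sum_eq_card_of_add_comp_eq_two (hr : Function.Involutive r) {f : α → ℤ}
    (h : ∀ j, f j + f (r j) = 2) : ∑ j, f j = Fintype.card α := by
  simpa using sum_eq_sum_of_add_comp_eq hr (g := fun _ => 1) h

theorem natCast_ncard_setOf (p : α → Prop) [DecidablePred p] :
    ({j | p j}.ncard : ℤ) = ∑ j, if p j then 1 else 0 := by
  rw [Set.ncard_eq_toFinset_card', Set.toFinset_ofPred, natCast_card_filter]

theorem ncard_eq_two_eq_ncard_add_ncard_not_even_div_four (hr : Function.Involutive r)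
    {μ μ' : α → ℤ} (hdual : ∀ j, μ j + μ' (r j) = 2) (hμ : ∀ j, 0 ≤ μ j ∧ μ j ≤ 2)
    (hpair : ∀ j, 1 ≤ μ j + μ (r j) ∧ μ j + μ (r j) ≤ 3)
    (hsum : ∑ j, μ j = Fintype.card α) (v : ℤ) (hv : v = 0 ∨ v = 4) :
    ({j | μ j = 2}.ncard : ℝ) =
      {j | μ j + μ' j = v}.ncard + ({j | ¬ Even (μ j + μ' j)}.ncard : ℝ) / 4 := by
  classical
  have hcentered : ∑ j, 2 * (μ j - 1) = 0 := by simp [← mul_sum, sum_sub_distrib, hsum]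
  -- `4[μ j = 2]` and `4[μ j + μ' j = v] + [μ j + μ' j odd] + 2(μ j - 1)` need not agree at
  -- each `j`, but they do after adding the same terms at `r j`.
  have hsym := sum_eq_sum_of_add_comp_eq hr (f := fun j => 4 * if μ j = 2 then 1 else 0)
    (g := fun j => (4 * (if μ j + μ' j = v then 1 else 0) +
      (if ¬ Even (μ j + μ' j) then 1 else 0)) + 2 * (μ j - 1)) fun j => by
    have h₁ : μ' j = 2 - μ (r j) := by have := hdual (r j); rw [hr j] at this; omega
    have h₂ : μ' (r j) = 2 - μ j := by linarith [hdual j]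
    simp only [h₁, h₂]
    obtain ⟨ha₀, ha₂⟩ := hμ j
    obtain ⟨hb₀, hb₂⟩ := hμ (r j)
    have := hpair j
    generalize μ j = a at *
    generalize μ (r j) = b at *
    rcases hv with rfl | rfl <;> interval_cases a <;> interval_cases b <;>
      first | omega | norm_num [Int.even_iff]
  simp only [sum_add_distrib, hcentered, add_zero, ← mul_sum] at hsym
  have hcount : 4 * ({j | μ j = 2}.ncard : ℤ) =
      4 * {j | μ j + μ' j = v}.ncard + {j | ¬ Even (μ j + μ' j)}.ncard := by
    simp only [natCast_ncard_setOf, hsym]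
  have := congrArg ((↑) : ℤ → ℝ) hcount
  push_cast at this
  linarith

end Involution

theorem omegaD_neg (m : ℕ) (i : ℤ) (j : Fin (2 * m)) :
    omegaD m (-i) j = -omegaD m i j.rev := by
  have hM : (0 : ℤ) < 2 * m := by have := j.isLt; omega
  have hrev : ((j.rev : ℕ) : ℤ) = 2 * m - 1 - j := by have := j.isLt; rw [Fin.val_rev]; omega
  obtain ⟨hc₀, hcM⟩ : 0 ≤ i % (2 * m) ∧ i % (2 * m) < 2 * m :=
    ⟨Int.emod_nonneg _ hM.ne', Int.emod_lt_of_pos _ hM⟩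
  have hi := Int.emod_add_mul_ediv i (2 * m)
  unfold omegaD
  rcases hc₀.eq_or_lt with hc | hc
  · obtain ⟨hq, hr⟩ : -i / (2 * m) = -(i / (2 * m)) ∧ -i % (2 * m) = 0 :=
      (Int.ediv_emod_unique hM).2 ⟨by linarith, le_rfl, hM⟩
    rw [hq, hr, ← hc, hrev]
    split_ifs <;> omega
  · obtain ⟨hq, hr⟩ : -i / (2 * m) = -(i / (2 * m)) - 1 ∧ -i % (2 * m) = 2 * m - i % (2 * m) :=
      (Int.ediv_emod_unique hM).2 ⟨by linarith, by omega, by omega⟩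
    rw [hq, hr, hrev]
    split_ifs <;> omega

theorem omegaD_of_le {m k : ℕ} (hk : k ≤ m) (j : Fin (2 * m)) :
    omegaD m k j = if (j : ℕ) < k then -1 else 0 := by
  have hM : (k : ℤ) < 2 * m := by have := j.isLt; omega
  rw [omegaD, Int.emod_eq_of_lt (by omega) hM, Int.ediv_eq_zero_of_lt (by omega) hM]
  simp only [Nat.cast_lt, neg_zero, zero_sub]

theorem inv_apply_rev {m : ℕ} {σ : Equiv.Perm (Fin (2 * m))}
    (hσ : ∀ j, σ j.rev = (σ j).rev) (j : Fin (2 * m)) : σ⁻¹ j.rev = (σ⁻¹ j).rev := by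
  rw [Equiv.Perm.inv_eq_iff_eq, hσ, ← Equiv.Perm.mul_apply, mul_inv_cancel, Equiv.Perm.one_apply]

theorem sum_muD (m : ℕ) (t : VecZ m) (σ : Equiv.Perm (Fin (2 * m))) (i : ℤ) :
    ∑ j, muD m t σ i j = ∑ j, t j := by
  simp only [muD, sum_sub_distrib, sum_add_distrib, Equiv.sum_comp σ⁻¹ (omegaD m i),
    add_sub_cancel_right]

theorem muD_add_muD_neg_rev {m : ℕ} (t : VecZ m) {σ : Equiv.Perm (Fin (2 * m))}
    (hσ : ∀ j, σ j.rev = (σ j).rev) (i : ℤ) (j : Fin (2 * m)) :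
    muD m t σ i j + muD m t σ (-i) j.rev = t j + t j.rev := by
  simp only [muD, omegaD_neg, inv_apply_rev hσ, Fin.rev_rev]
  ring

theorem muD_add_muD_rev_mem_Icc {m k : ℕ} (hk : k ≤ m) {t : VecZ m}
    (ht : ∀ j, t j + t j.rev = 2) {σ : Equiv.Perm (Fin (2 * m))}
    (hσ : ∀ j, σ j.rev = (σ j).rev) (j : Fin (2 * m)) :
    1 ≤ muD m t σ k j + muD m t σ k j.rev ∧ muD m t σ k j + muD m t σ k j.rev ≤ 3 := by
  have hrev (l : Fin (2 * m)) : (l : ℕ) + l.rev = 2 * m - 1 := by rw [Fin.val_rev]; omega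
  have := ht j
  have := hrev j
  have := hrev (σ⁻¹ j)
  simp only [muD, omegaD_of_le hk, inv_apply_rev hσ]
  split_ifs <;> omega

theorem isIntVal_intCast_div_two_iff (n : ℤ) : IsIntVal ((n : ℝ) / 2) ↔ Even n := by
  constructor
  · rintro ⟨z, hz⟩
    refine ⟨z, Int.cast_injective (α := ℝ) ?_⟩
    push_cast
    linarith [(div_eq_iff two_ne_zero).1 hz]
  · rintro ⟨z, rfl⟩
    exact ⟨z, by push_cast; ring⟩

theorem intCast_div_two_eq_two_iff (n : ℤ) : (n : ℝ) / 2 = 2 ↔ n = 4 := by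
  rw [div_eq_iff two_ne_zero]
  norm_num
  norm_cast

theorem statement8_general (m : ℕ)
    (t : VecZ m) (σ : Equiv.Perm (Fin (2 * m))) (hσ : InSO m σ)
    (k : ℕ) (hk : k ≤ m) (h1 : SP1 m t σ (k : ℤ)) :
    (cD m t σ (k : ℤ) : ℝ) =
      (Set.ncard {j : Fin (2 * m) | nuD m t σ (k : ℤ) j = 2} : ℝ) +
        (Set.ncard {j : Fin (2 * m) | ¬ IsIntVal (nuD m t σ (k : ℤ) j)} : ℝ) / 4 ∧
    (cD m t σ (k : ℤ) : ℝ) =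
      (Set.ncard {j : Fin (2 * m) | nuD m t σ (k : ℤ) j = 0} : ℝ) +
        (Set.ncard {j : Fin (2 * m) | ¬ IsIntVal (nuD m t σ (k : ℤ) j)} : ℝ) / 4 := by
  have ht (j : Fin (2 * m)) : t j + t j.rev = 2 :=
    (muD_add_muD_neg_rev t hσ.2 k j).symm.trans (h1.1 j)
  have hsum : ∑ j, muD m t σ k j = Fintype.card (Fin (2 * m)) := by
    rw [sum_muD]
    exact sum_eq_card_of_add_comp_eq_two Fin.rev_involutive ht
  have hcount := ncard_eq_two_eq_ncard_add_ncard_not_even_div_four Fin.rev_involutive h1.1 h1.2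
    (muD_add_muD_rev_mem_Icc hk ht hσ.2) hsum
  simp only [cD, nuD, intCast_div_two_eq_two_iff, div_eq_zero_iff, Int.cast_eq_zero,
    two_ne_zero, or_false, isIntVal_intCast_div_two_iff]
  exact ⟨hcount 4 (.inr rfl), hcount 0 (.inl rfl)⟩

theorem statement8 (m : ℕ) (hm : 2 ≤ m)
    (t : VecZ m) (σ : Equiv.Perm (Fin (2 * m))) (ht : InXD m t) (hσ : InSO m σ)
    (k : ℕ) (hk : k ≤ m) (h1 : SP1 m t σ (k : ℤ)) :
    (cD m t σ (k : ℤ) : ℝ) =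
      (Set.ncard {j : Fin (2 * m) | nuD m t σ (k : ℤ) j = 2} : ℝ) +
        (Set.ncard {j : Fin (2 * m) | ¬ IsIntVal (nuD m t σ (k : ℤ) j)} : ℝ) / 4 ∧
    (cD m t σ (k : ℤ) : ℝ) =
      (Set.ncard {j : Fin (2 * m) | nuD m t σ (k : ℤ) j = 0} : ℝ) +
        (Set.ncard {j : Fin (2 * m) | ¬ IsIntVal (nuD m t σ (k : ℤ) j)} : ℝ) / 4 :=
  statement8_general m t σ hσ k hk h1

end TypeD
end

section
/- Let w ∈ W̃_{D_m} and 0 ≤ k ≤ m. Then w satisfies (SP1') and (SP2') at k if and only if ν_k^w ∈ Conv(S_{2m}^∘·μ). -/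
open Finset

namespace TypeD

/-!
Since `ν_k^w` has entries in `½ℤ`, (SP1') confines them to `{0, ½, 1, 3/2, 2}`, and then
`∑_j |ν(j) - 1| = 2·#{j : ν(j) = 2} + #{j : ν(j) ∉ ℤ}/2`. So (SP1') ∧ (SP2') says exactly that `ν`
lies in the polytope `P = {x : x + x* = 𝟐, 𝟎 ≤ x ≤ 𝟐, ∑_j |x(j) - 1| ≤ 2q}`, and the theorem
reduces to `Conv(S_{2m}^∘ · μ) = P`.

`P` is convex and contains the orbit. Conversely, by Krein–Milman it suffices that every extreme
point `x` of `P` lies in the orbit. Perturbing `x` along the pairs `(j, j*)` shows that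
`∑_j |x(j) - 1| = 2q` and that `x` has entries in `{0, 1, 2}`, hence exactly `q` entries `2`.
Such an `x` is `σ·μ` for a permutation `σ` commuting with `*`; since `q < m`, an odd `σ` is
corrected by the transposition of two middle entries `1` of `μ`.
-/

open scoped Classical

variable {m q : ℕ}

lemma rev_ne_self (l : Fin (2 * m)) : l.rev ≠ l := by
  intro h
  have := congrArg Fin.val h
  rw [Fin.val_rev] at this
  omega

lemma perm_inv_apply_rev {σ : Equiv.Perm (Fin (2 * m))} (hσ : ∀ j, σ j.rev = (σ j).rev)
    (j : Fin (2 * m)) : σ⁻¹ j.rev = (σ⁻¹ j).rev := by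
  rw [Equiv.Perm.inv_eq_iff_eq, hσ, Equiv.Perm.coe_inv, Equiv.apply_symm_apply]

lemma swap_rev_apply_rev (c l : Fin (2 * m)) :
    Equiv.swap c c.rev l.rev = (Equiv.swap c c.rev l).rev := by
  by_cases h₁ : l = c
  · subst h₁; simp
  by_cases h₂ : l = c.rev
  · subst h₂; simp
  rw [Equiv.swap_apply_of_ne_of_ne h₁ h₂, Equiv.swap_apply_of_ne_of_ne
    (by rwa [Ne, Fin.rev_eq_iff]) (by rwa [Ne, Fin.rev_eq_iff, Fin.rev_rev])]

lemma sum_eq_two_nsmul_sum_lt {M : Type*} [AddCommMonoid M] (f : Fin (2 * m) → M)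
    (hf : ∀ l, f l.rev = f l) :
    ∑ l, f l = 2 • ∑ l : Fin (2 * m), if (l : ℕ) < m then f l else 0 := by
  have hsplit : ∑ l, f l =
      ∑ l : Fin (2 * m), ((if (l : ℕ) < m then f l else 0) + if (l : ℕ) < m then 0 else f l) :=
    Finset.sum_congr rfl fun l _ => by split_ifs <;> simp
  have hrev : ∑ l : Fin (2 * m), (if (l : ℕ) < m then 0 else f l) =
      ∑ l : Fin (2 * m), if (l : ℕ) < m then f l else 0 := by
    rw [← Equiv.sum_comp Fin.revPerm]
    refine Finset.sum_congr rfl fun l _ => ?_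
    have := l.isLt
    simp only [Fin.revPerm_apply, Fin.val_rev, hf]
    split_ifs <;> first | rfl | omega
  rw [hsplit, Finset.sum_add_distrib, hrev, two_nsmul]

lemma cast_muQ_add_cast_muQ_rev (hq : q ≤ m) (l : Fin (2 * m)) :
    (muQ m q l : ℝ) + muQ m q l.rev = 2 := by
  have := l.isLt
  norm_cast
  simp only [muQ, Fin.val_rev]
  split_ifs <;> omega

lemma muQ_eq_two_iff (l : Fin (2 * m)) : muQ m q l = 2 ↔ (l : ℕ) < q := by
  unfold muQ; split_ifs <;> omega

lemma cast_muQ_eq_zero_or_eq_one_or_eq_two (l : Fin (2 * m)) :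
    (muQ m q l : ℝ) = 0 ∨ (muQ m q l : ℝ) = 1 ∨ (muQ m q l : ℝ) = 2 := by
  unfold muQ; split_ifs <;> simp

lemma card_muQ_eq_two (hq : q ≤ m) : #{l | (muQ m q l : ℝ) = 2} = q := by
  simp only [show ∀ l, (muQ m q l : ℝ) = 2 ↔ muQ m q l = 2 from fun l => by norm_cast,
    muQ_eq_two_iff, Fin.card_filter_val_lt]
  omega

lemma isIntVal_zero : IsIntVal 0 := ⟨0, by simp⟩

lemma isIntVal_one : IsIntVal 1 := ⟨1, by simp⟩

lemma isIntVal_two : IsIntVal 2 := ⟨2, by simp⟩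

lemma not_isIntVal_half : ¬ IsIntVal (1 / 2) := by
  rintro ⟨z, hz⟩
  have : (2 * z : ℤ) = 1 := by exact_mod_cast (by linarith : (2 * z : ℝ) = 1)
  omega

lemma not_isIntVal_three_halves : ¬ IsIntVal (3 / 2) := by
  rintro ⟨z, hz⟩
  have : (2 * z : ℤ) = 3 := by exact_mod_cast (by linarith : (2 * z : ℝ) = 3)
  omega

lemma int_div_two_cases {z : ℤ} (h₀ : 0 ≤ (z : ℝ) / 2) (h₂ : (z : ℝ) / 2 ≤ 2) :
    (z : ℝ) / 2 = 0 ∨ (z : ℝ) / 2 = 1 / 2 ∨ (z : ℝ) / 2 = 1 ∨ (z : ℝ) / 2 = 3 / 2 ∨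
      (z : ℝ) / 2 = 2 := by
  have hz₀ : 0 ≤ z := by exact_mod_cast (by linarith : (0 : ℝ) ≤ z)
  have hz₄ : z ≤ 4 := by exact_mod_cast (by linarith : (z : ℝ) ≤ 4)
  interval_cases z <;> norm_num

lemma abs_sub_one_le_one_iff {z : ℝ} : |z - 1| ≤ 1 ↔ 0 ≤ z ∧ z ≤ 2 := by
  rw [abs_sub_le_iff]
  constructor <;> rintro ⟨h₁, h₂⟩ <;> constructor <;> linarith

lemma abs_add_mul_sub_one_le (z t v : ℝ) : |z + t * v - 1| ≤ |z - 1| + |t| * |v| := by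
  rw [← abs_mul, show z + t * v - 1 = (z - 1) + t * v by ring]
  exact abs_add_le _ _

lemma abs_sub_one_rev {x : VecR m} (hx : ∀ l, x l + x l.rev = 2) (l : Fin (2 * m)) :
    |x l.rev - 1| = |x l - 1| := by
  rw [show x l.rev - 1 = -(x l - 1) by linarith [hx l], abs_neg]

/-- Each entry `2` of `x` is matched by an entry `0` at the reversed index. -/
lemma sum_abs_sub_one_eq {x : VecR m} (hx : ∀ l, x l + x l.rev = 2)
    (hval : ∀ l, x l = 0 ∨ x l = 1 / 2 ∨ x l = 1 ∨ x l = 3 / 2 ∨ x l = 2) :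
    ∑ l, |x l - 1| = 2 * #{l | x l = 2} + #{l | ¬ IsIntVal (x l)} / 2 := by
  have hpt (l : Fin (2 * m)) : |x l - 1| = (if x l = 2 then 1 else 0) +
      (if x l.rev = 2 then 1 else 0) + (if ¬ IsIntVal (x l) then 1 else 0) / 2 := by
    rw [show x l.rev = 2 - x l by linarith [hx l]]
    rcases hval l with h | h | h | h | h <;> rw [h]
    · norm_num [isIntVal_zero]
    · norm_num [not_isIntVal_half]
    · norm_num [isIntVal_one]
    · norm_num [not_isIntVal_three_halves]
    · norm_num [isIntVal_two]
  have hrev := Equiv.sum_comp Fin.revPerm (fun l => if x l = 2 then (1 : ℝ) else 0)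
  simp only [Fin.revPerm_apply] at hrev
  rw [Finset.sum_congr rfl fun l _ => hpt l, Finset.sum_add_distrib, Finset.sum_add_distrib, hrev,
    ← Finset.sum_div, Finset.sum_boole, Finset.sum_boole]
  ring

/-- `P`, with the entry-wise bounds written as in (SP1'). -/
def muPolytope (m q : ℕ) : Set (VecR m) :=
  {x | (∀ j, x j + x j.rev = 2) ∧ (∀ j, 0 ≤ x j ∧ x j ≤ 2) ∧ ∑ j, |x j - 1| ≤ 2 * q}

lemma abs_sub_one_le_one_of_mem_muPolytope {x : VecR m} (hx : x ∈ muPolytope m q)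
    (l : Fin (2 * m)) : |x l - 1| ≤ 1 :=
  abs_sub_one_le_one_iff.2 (hx.2.1 l)

lemma convex_muPolytope : Convex ℝ (muPolytope m q) := by
  rintro x ⟨hx₁, hx₂, hx₃⟩ y ⟨hy₁, hy₂, hy₃⟩ a b ha hb hab
  refine ⟨fun j => ?_, fun j => ?_, ?_⟩ <;> simp only [Pi.add_apply, Pi.smul_apply, smul_eq_mul]
  · linear_combination a * hx₁ j + b * hy₁ j + 2 * hab
  · obtain ⟨hx0, hx2⟩ := hx₂ j
    obtain ⟨hy0, hy2⟩ := hy₂ j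
    constructor <;> nlinarith
  · calc ∑ j, |a * x j + b * y j - 1| ≤ ∑ j, (a * |x j - 1| + b * |y j - 1|) := by
          gcongr with j
          calc |a * x j + b * y j - 1| = |a * (x j - 1) + b * (y j - 1)| := by
                congr 1; linear_combination hab
            _ ≤ |a * (x j - 1)| + |b * (y j - 1)| := abs_add_le _ _
            _ = a * |x j - 1| + b * |y j - 1| := by
                rw [abs_mul, abs_mul, abs_of_nonneg ha, abs_of_nonneg hb]
      _ = a * ∑ j, |x j - 1| + b * ∑ j, |y j - 1| := by
          rw [Finset.sum_add_distrib, Finset.mul_sum, Finset.mul_sum]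
      _ ≤ a * (2 * q) + b * (2 * q) := by gcongr
      _ = 2 * q := by linear_combination 2 * (q : ℝ) * hab

lemma isCompact_muPolytope : IsCompact (muPolytope m q) := by
  refine (isCompact_univ_pi fun _ => isCompact_Icc (a := (0 : ℝ)) (b := 2)).of_isClosed_subset
    ?_ fun x hx j _ => hx.2.1 j
  simp only [muPolytope, Set.ofPred_and, Set.ofPred_forall]
  refine (isClosed_iInter fun j => ?_).inter ((isClosed_iInter fun j => ?_).inter ?_)
  · exact isClosed_eq (by fun_prop) (by fun_prop)
  · exact (isClosed_le (by fun_prop) (by fun_prop)).inter (isClosed_le (by fun_prop) (by fun_prop))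
  · exact isClosed_le (by fun_prop) (by fun_prop)

lemma orbitMu_subset_muPolytope (hq : q ≤ m) : OrbitMu m q ⊆ muPolytope m q := by
  rintro x ⟨σ, hσ, hx⟩
  have hpair := cast_muQ_add_cast_muQ_rev hq
  have hval := cast_muQ_eq_zero_or_eq_one_or_eq_two (m := m) (q := q)
  refine ⟨fun j => ?_, fun j => ?_, ?_⟩ <;> simp only [hx]
  · rw [perm_inv_apply_rev hσ.2]; exact hpair _
  · rcases hval (σ⁻¹ j) with h | h | h <;> rw [h] <;> norm_num
  · rw [Equiv.sum_comp σ⁻¹ (fun l => |(muQ m q l : ℝ) - 1|), sum_abs_sub_one_eq hpair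
      (fun l => by rcases hval l with h | h | h <;> simp [h]), card_muQ_eq_two hq,
      Finset.filter_false_of_mem fun l _ => not_not.2 ⟨muQ m q l, rfl⟩]
    simp

lemma convMu_subset_muPolytope (hq : q ≤ m) : ConvMu m q ⊆ muPolytope m q :=
  convexHull_min (orbitMu_subset_muPolytope hq) convex_muPolytope

section RevSplit

variable (p : Fin (2 * m) → Prop) [DecidablePred p] (hp : ∀ l, p l.rev ↔ ¬ p l)

/-- A set `p` of representatives of the pairs `{l, l.rev}` identifies `Fin (2m)` with two copies
of `p`, the second one through `rev`. -/
def revSplit : Fin (2 * m) ≃ {l // p l} ⊕ {l // p l} :=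
  (Equiv.sumCompl p).symm.trans
    ((Equiv.refl _).sumCongr (Fin.revPerm.subtypeEquiv fun l => by simp [hp]))

lemma revSplit_rev (l : Fin (2 * m)) : revSplit p hp l.rev = (revSplit p hp l).swap := by
  by_cases h : p l
  · have h' : ¬ p l.rev := fun h' => (hp l).1 h' h
    simp [revSplit, Equiv.sumCompl_symm_apply_of_pos h, Equiv.sumCompl_symm_apply_of_neg h']
  · have h' : p l.rev := (hp l).2 h
    simp [revSplit, Equiv.sumCompl_symm_apply_of_pos h', Equiv.sumCompl_symm_apply_of_neg h]

lemma revSplit_symm_swap (s : {l // p l} ⊕ {l // p l}) :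
    (revSplit p hp).symm s.swap = ((revSplit p hp).symm s).rev := by
  rw [Equiv.symm_apply_eq, revSplit_rev, Equiv.apply_symm_apply]

lemma apply_revSplit_symm {x : VecR m} (hx : ∀ l, x l + x l.rev = 2)
    (s : {l // p l} ⊕ {l // p l}) :
    x ((revSplit p hp).symm s) =
      Sum.elim (fun r : {l // p l} => x r) (fun r : {l // p l} => 2 - x r) s := by
  rcases s with r | r
  · simp [revSplit]
  · simp [revSplit]
    linarith [hx r]

end RevSplit

/-- For `x` with entries in `{0, 1, 2}`: the entries `2`, and the entries `1` in the first half,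
represent the pairs `{l, l.rev}`. -/
def pairRep (x : VecR m) (l : Fin (2 * m)) : Prop := x l = 2 ∨ (x l = 1 ∧ (l : ℕ) < m)

section PairRep

variable {x : VecR m}

lemma pairRep_rev_iff (hx : ∀ l, x l + x l.rev = 2) (hx₃ : ∀ l, x l = 0 ∨ x l = 1 ∨ x l = 2)
    (l : Fin (2 * m)) : pairRep x l.rev ↔ ¬ pairRep x l := by
  have hl := l.isLt
  simp only [pairRep, Fin.val_rev, show x l.rev = 2 - x l by linarith [hx l]]
  rcases hx₃ l with h | h | h
  · norm_num [h]
  · norm_num [h]; omega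
  · norm_num [h]

lemma card_pairRep (hx : ∀ l, x l + x l.rev = 2) (hx₃ : ∀ l, x l = 0 ∨ x l = 1 ∨ x l = 2) :
    Fintype.card {l // pairRep x l} = m := by
  have := Fintype.card_congr (revSplit _ (pairRep_rev_iff hx hx₃))
  simp only [Fintype.card_fin, Fintype.card_sum] at this
  omega

lemma card_pairRep_fiber (hx : ∀ l, x l + x l.rev = 2) (hx₃ : ∀ l, x l = 0 ∨ x l = 1 ∨ x l = 2)
    (b : Bool) : Fintype.card {r : {l // pairRep x l} // decide (x r = 2) = b} =
      bif b then #{l | x l = 2} else m - #{l | x l = 2} := by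
  have htwo : Fintype.card {r : {l // pairRep x l} // x r = 2} = #{l | x l = 2} := by
    rw [← Fintype.card_subtype]
    exact Fintype.card_congr (Equiv.subtypeSubtypeEquivSubtype Or.inl)
  cases b
  · rw [Fintype.card_congr (Equiv.subtypeEquivRight
      (p := fun r : {l // pairRep x l} => decide (x r = 2) = false) (q := fun r => ¬ x r = 2)
      fun r => by simp), Fintype.card_subtype_compl, htwo, card_pairRep hx hx₃]
    rfl
  · rw [Fintype.card_congr (Equiv.subtypeEquivRight
      (p := fun r : {l // pairRep x l} => decide (x r = 2) = true) (q := fun r => x r = 2)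
      fun r => by simp), htwo]
    rfl

end PairRep

lemma exists_perm_rev_comm_apply_eq {x y : VecR m} (hx : ∀ l, x l + x l.rev = 2)
    (hy : ∀ l, y l + y l.rev = 2) (hx₃ : ∀ l, x l = 0 ∨ x l = 1 ∨ x l = 2)
    (hy₃ : ∀ l, y l = 0 ∨ y l = 1 ∨ y l = 2) (hcard : #{l | x l = 2} = #{l | y l = 2}) :
    ∃ σ : Equiv.Perm (Fin (2 * m)), (∀ l, σ l.rev = (σ l).rev) ∧ ∀ l, x (σ l) = y l := by
  set sx := revSplit _ (pairRep_rev_iff hx hx₃)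
  set sy := revSplit _ (pairRep_rev_iff hy hy₃)
  let e (b : Bool) : {r : {l // pairRep y l} // decide (y r = 2) = b} ≃
      {r : {l // pairRep x l} // decide (x r = 2) = b} :=
    Fintype.equivOfCardEq (by rw [card_pairRep_fiber hy hy₃, card_pairRep_fiber hx hx₃, hcard])
  let g := Equiv.ofFiberEquiv e
  have hg (r : {l // pairRep y l}) : x (g r) = y r := by
    have hkey : decide (x (g r) = 2) = decide (y r = 2) := Equiv.ofFiberEquiv_map e r
    rcases (g r).2 with h | h <;> rcases r.2 with h' | h' <;> simp_all
  refine ⟨sy.trans ((g.sumCongr g).trans sx.symm), fun l => ?_, fun l => ?_⟩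
  · simp only [Equiv.trans_apply, sy, revSplit_rev, Equiv.sumCongr_apply, sx,
      ← revSplit_symm_swap]
    rcases revSplit _ _ l with r | r <;> rfl
  · simp only [Equiv.trans_apply, sx, apply_revSplit_symm _ _ hx]
    conv_rhs => rw [← sy.symm_apply_apply l, apply_revSplit_symm _ _ hy]
    rcases sy l with r | r <;> simp [hg]

lemma mem_orbitMu_of_apply_eq (hqm : q < m) {x : VecR m} {σ : Equiv.Perm (Fin (2 * m))}
    (hσ : ∀ l, σ l.rev = (σ l).rev) (hx : ∀ l, x (σ l) = muQ m q l) : x ∈ OrbitMu m q := by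
  have hmem (σ' : Equiv.Perm (Fin (2 * m))) (hσ' : InSO m σ')
      (hx' : ∀ l, x (σ' l) = muQ m q l) : x ∈ OrbitMu m q :=
    ⟨σ', hσ', fun j => by rw [← hx', Equiv.Perm.coe_inv, Equiv.apply_symm_apply]⟩
  rcases Int.units_eq_one_or (Equiv.Perm.sign σ) with h | h
  · exact hmem σ ⟨h, hσ⟩ hx
  -- `μ` has the entry `1` at both `q` and its reverse, since `q < m`
  let c : Fin (2 * m) := ⟨q, by omega⟩
  have hμc : muQ m q c.rev = muQ m q c := by simp [muQ, c]; omega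
  refine hmem (σ * Equiv.swap c c.rev) ⟨?_, fun l => ?_⟩ fun l => ?_
  · simp [h, Equiv.Perm.sign_swap (rev_ne_self c).symm]
  · simp only [Equiv.Perm.mul_apply, swap_rev_apply_rev, hσ]
  · rw [Equiv.Perm.mul_apply, hx, Equiv.swap_apply_def]
    split_ifs <;> simp_all

lemma mem_orbitMu_of_sum_abs_sub_one_eq (hqm : q < m) {x : VecR m}
    (hx : ∀ l, x l + x l.rev = 2) (hx₃ : ∀ l, x l = 0 ∨ x l = 1 ∨ x l = 2)
    (hsum : ∑ l, |x l - 1| = 2 * q) : x ∈ OrbitMu m q := by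
  have hint : #{l | ¬ IsIntVal (x l)} = 0 := by
    refine Finset.card_eq_zero.2 (Finset.filter_false_of_mem fun l _ => not_not.2 ?_)
    rcases hx₃ l with h | h | h <;> rw [h]
    exacts [isIntVal_zero, isIntVal_one, isIntVal_two]
  have hcard : #{l | x l = 2} = q := by
    rw [sum_abs_sub_one_eq hx (fun l => by rcases hx₃ l with h | h | h <;> simp [h]), hint] at hsum
    exact_mod_cast (by linarith : (#{l | x l = 2} : ℝ) = q)
  obtain ⟨σ, hσ, hxσ⟩ := exists_perm_rev_comm_apply_eq (y := fun l => (muQ m q l : ℝ)) hx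
    (cast_muQ_add_cast_muQ_rev hqm.le) hx₃ cast_muQ_eq_zero_or_eq_one_or_eq_two
    (by rw [hcard, card_muQ_eq_two hqm.le])
  exact mem_orbitMu_of_apply_eq hqm hσ hxσ

lemma eq_zero_of_mem_extremePoints {E : Type*} [AddCommGroup E] [Module ℝ E] {A : Set E}
    {x v : E} (hx : x ∈ A.extremePoints ℝ) {ε : ℝ} (hε : 0 < ε)
    (h : ∀ t : ℝ, |t| ≤ ε → x + t • v ∈ A) : v = 0 := by
  have hseg : x ∈ openSegment ℝ (x + ε • v) (x + (-ε) • v) :=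
    ⟨1 / 2, 1 / 2, by norm_num, by norm_num, by norm_num, by module⟩
  have := ((mem_extremePoints.1 hx).2 _ (h ε (abs_of_pos hε).le) _
    (h (-ε) (by rw [abs_neg, abs_of_pos hε])) hseg).1
  simpa [hε.ne'] using this

/-- Otherwise the pair `(i, i.rev)` could be moved in both directions. -/
lemma abs_sub_one_eq_one_of_mem_extremePoints {x : VecR m}
    (hx : x ∈ (muPolytope m q).extremePoints ℝ) (hlt : ∑ l, |x l - 1| < 2 * q)
    (i : Fin (2 * m)) : |x i - 1| = 1 := by
  have hpair := hx.1.1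
  have hbox := abs_sub_one_le_one_of_mem_muPolytope hx.1
  by_contra hne
  set ε := min (1 - |x i - 1|) ((2 * q - ∑ l, |x l - 1|) / 2)
  have hε₁ : ε ≤ 1 - |x i - 1| := min_le_left _ _
  have hε₂ : ε ≤ (2 * q - ∑ l, |x l - 1|) / 2 := min_le_right _ _
  have hε : 0 < ε := lt_min (by linarith [lt_of_le_of_ne (hbox i) hne]) (by linarith)
  set v : VecR m := Pi.single i 1 - Pi.single i.rev 1
  have hii : i ≠ i.rev := (rev_ne_self i).symm
  have hv (l : Fin (2 * m)) : |v l| = (if l = i then 1 else 0) + (if l = i.rev then 1 else 0) := by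
    by_cases h₁ : l = i
    · subst h₁; simp [v, hii]
    by_cases h₂ : l = i.rev
    · subst h₂; simp [v, hii.symm]
    simp [v, h₁, h₂]
  have hv_rev (l : Fin (2 * m)) : v l.rev = - v l := by
    simp only [v, Pi.sub_apply, Pi.single_apply, Fin.rev_eq_iff, Fin.rev_rev]
    ring
  have hv_sum : ∑ l, |v l| = 2 := by
    simp only [hv, Finset.sum_add_distrib, Finset.sum_ite_eq', Finset.mem_univ, if_true]
    norm_num
  have hv0 : v = 0 := eq_zero_of_mem_extremePoints hx hε fun t ht => by
    have hle (l : Fin (2 * m)) : |x l + t * v l - 1| ≤ |x l - 1| + ε * |v l| :=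
      (abs_add_mul_sub_one_le _ _ _).trans (by gcongr)
    refine ⟨fun l => ?_, fun l => ?_, ?_⟩ <;> simp only [Pi.add_apply, Pi.smul_apply, smul_eq_mul]
    · linear_combination hpair l + t * hv_rev l
    · refine abs_sub_one_le_one_iff.1 ((hle l).trans ?_)
      rw [hv]
      by_cases h₁ : l = i
      · subst h₁; simp [hii]; linarith
      by_cases h₂ : l = i.rev
      · subst h₂; simp [hii.symm, abs_sub_one_rev hpair]; linarith
      simpa [h₁, h₂] using hbox l
    · calc ∑ l, |x l + t * v l - 1| ≤ ∑ l, (|x l - 1| + ε * |v l|) :=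
            Finset.sum_le_sum fun l _ => hle l
        _ = ∑ l, |x l - 1| + 2 * ε := by
            rw [Finset.sum_add_distrib, ← Finset.mul_sum, hv_sum]; ring
        _ ≤ 2 * q := by linarith
  have := congrFun hv0 i
  simp [v, hii] at this

/-- Otherwise scaling the deviations `x_l - 1` up on one of the pairs and down on the other would
preserve `∑ |x_l - 1|`. -/
lemma eq_or_eq_rev_of_mem_extremePoints {x : VecR m}
    (hx : x ∈ (muPolytope m q).extremePoints ℝ) {i j : Fin (2 * m)}
    (hi₀ : 0 < |x i - 1|) (hi₁ : |x i - 1| < 1) (hj₀ : 0 < |x j - 1|) (hj₁ : |x j - 1| < 1) :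
    j = i ∨ j = i.rev := by
  obtain ⟨hpair, -, hsum⟩ := hx.1
  have hbox := abs_sub_one_le_one_of_mem_muPolytope hx.1
  by_contra! hji
  set a := |x i - 1|
  set b := |x j - 1|
  let ind (k l : Fin (2 * m)) : ℝ := (if l = k then 1 else 0) + (if l = k.rev then 1 else 0)
  have hind_rev (k l : Fin (2 * m)) : ind k l.rev = ind k l := by
    simp only [ind, Fin.rev_eq_iff, Fin.rev_rev]; ring
  have hind_sum (k : Fin (2 * m)) : ∑ l, ind k l * |x l - 1| = 2 * |x k - 1| := by
    simp only [ind, add_mul, ite_mul, one_mul, zero_mul, Finset.sum_add_distrib,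
      Finset.sum_ite_eq', Finset.mem_univ, if_true, abs_sub_one_rev hpair]
    ring
  let τ (l : Fin (2 * m)) : ℝ := b * ind i l - a * ind j l
  have hii : i ≠ i.rev := (rev_ne_self i).symm
  have hjj : j ≠ j.rev := (rev_ne_self j).symm
  have hτi : τ i = b := by simp [τ, ind, hii, hji.1.symm, Ne.symm (Fin.rev_ne_iff.2 hji.2)]
  have hτj : τ j = -a := by simp [τ, ind, hji.1, hji.2, hjj]
  have hτ_rev (l : Fin (2 * m)) : τ l.rev = τ l := by simp only [τ, hind_rev]
  have hτ (l : Fin (2 * m)) :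
      (|x l - 1| = a ∧ τ l = b) ∨ (|x l - 1| = b ∧ τ l = -a) ∨ τ l = 0 := by
    by_cases h₁ : l = i ∨ l = i.rev
    · rcases h₁ with rfl | rfl
      exacts [Or.inl ⟨rfl, hτi⟩, Or.inl ⟨abs_sub_one_rev hpair _, by rw [hτ_rev, hτi]⟩]
    by_cases h₂ : l = j ∨ l = j.rev
    · rcases h₂ with rfl | rfl
      exacts [Or.inr (Or.inl ⟨rfl, hτj⟩),
        Or.inr (Or.inl ⟨abs_sub_one_rev hpair _, by rw [hτ_rev, hτj]⟩)]
    simp only [not_or] at h₁ h₂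
    simp [τ, ind, h₁, h₂]
  set ε := min (1 - a) (1 - b)
  have hε : 0 < ε := lt_min (by linarith) (by linarith)
  set w : VecR m := fun l => τ l * (x l - 1)
  have hw0 : w = 0 := eq_zero_of_mem_extremePoints hx hε fun t ht => by
    have hε1 : ε ≤ 1 := (min_le_left _ _).trans (by linarith)
    have habs (l : Fin (2 * m)) : |x l + t * w l - 1| = (1 + t * τ l) * |x l - 1| := by
      rw [show x l + t * w l - 1 = (1 + t * τ l) * (x l - 1) by simp only [w]; ring, abs_mul,
        abs_of_nonneg]
      have := abs_le.1 (ht.trans hε1)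
      rcases hτ l with ⟨-, h⟩ | ⟨-, h⟩ | h <;> rw [h] <;> nlinarith
    refine ⟨fun l => ?_, fun l => ?_, ?_⟩ <;> simp only [Pi.add_apply, Pi.smul_apply, smul_eq_mul]
    · simp only [w, hind_rev, τ]
      linear_combination (1 + t * τ l) * hpair l
    · refine abs_sub_one_le_one_iff.1 ?_
      rw [habs]
      have hab : a * b ≤ 1 := by nlinarith
      have hab0 : 0 ≤ a * b := by positivity
      rcases hτ l with ⟨h, h'⟩ | ⟨h, h'⟩ | h' <;> rw [h']
      · rw [h]
        nlinarith [min_le_left (1 - a) (1 - b), mul_nonneg (abs_nonneg t) (sub_nonneg.2 hab),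
          mul_nonneg (sub_nonneg.2 (le_abs_self t)) hab0]
      · rw [h]
        nlinarith [min_le_right (1 - a) (1 - b), mul_nonneg (abs_nonneg t) (sub_nonneg.2 hab),
          mul_nonneg (sub_nonneg.2 (neg_abs_le t)) hab0]
      · simpa using hbox l
    · simp only [habs, add_mul, one_mul, Finset.sum_add_distrib, mul_assoc, ← Finset.mul_sum, τ,
        sub_mul, Finset.sum_sub_distrib, hind_sum]
      linarith
  have hwi : b * (x i - 1) = 0 := by simpa only [w, hτi, Pi.zero_apply] using congrFun hw0 i
  exact mul_ne_zero hj₀.ne' (abs_pos.1 hi₀) hwi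

/-- By the previous lemma there would be exactly one such pair `{i, i.rev}`, and then
`2q = 2 |x_i - 1| + (an even number of entries with |x_l - 1| = 1)`. -/
lemma abs_sub_one_eq_zero_or_one_of_mem_extremePoints {x : VecR m}
    (hx : x ∈ (muPolytope m q).extremePoints ℝ) (hsum : ∑ l, |x l - 1| = 2 * q)
    (l : Fin (2 * m)) : |x l - 1| = 0 ∨ |x l - 1| = 1 := by
  have hpair := hx.1.1
  have hbox := abs_sub_one_le_one_of_mem_muPolytope hx.1
  by_contra! hl
  obtain ⟨i, hil, hi⟩ : ∃ i : Fin (2 * m), |x i - 1| = |x l - 1| ∧ (i : ℕ) < m := by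
    by_cases h : (l : ℕ) < m
    · exact ⟨l, rfl, h⟩
    · exact ⟨l.rev, abs_sub_one_rev hpair l, by rw [Fin.val_rev]; omega⟩
  have hi₀ : 0 < |x i - 1| := hil ▸ (abs_nonneg _).lt_of_ne' hl.1
  have hi₁ : |x i - 1| < 1 := hil ▸ (hbox l).lt_of_ne hl.2
  set g : Fin (2 * m) → ℝ := fun k => if (k : ℕ) < m then |x k - 1| else 0
  have hg (k : Fin (2 * m)) (hk : k ≠ i) : g k = if g k = 1 then 1 else 0 := by
    suffices g k = 0 ∨ g k = 1 by rcases this with h | h <;> simp [h]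
    simp only [g]
    split_ifs with hkm
    · by_contra! h
      rcases eq_or_eq_rev_of_mem_extremePoints hx hi₀ hi₁ ((abs_nonneg _).lt_of_ne' h.1)
        ((hbox k).lt_of_ne h.2) with h' | h'
      · exact hk h'
      · rw [h', Fin.val_rev] at hkm; omega
    · exact Or.inl rfl
  have hq : ∑ k, g k = q := by
    have := sum_eq_two_nsmul_sum_lt (fun k => |x k - 1|) (abs_sub_one_rev hpair)
    rw [two_nsmul] at this
    linarith
  rw [← Finset.add_sum_erase _ _ (Finset.mem_univ i),
    Finset.sum_congr rfl fun k hk => hg k (Finset.ne_of_mem_erase hk), Finset.sum_boole] at hq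
  simp only [g, if_pos hi] at hq
  set N := #{k ∈ univ.erase i | g k = 1}
  have h₁ : N < q := by exact_mod_cast (by linarith : (N : ℝ) < q)
  have h₂ : q < N + 1 := by exact_mod_cast (by linarith : (q : ℝ) < N + 1)
  omega

lemma mem_orbitMu_of_mem_extremePoints (hqm : q < m) {x : VecR m}
    (hx : x ∈ (muPolytope m q).extremePoints ℝ) : x ∈ OrbitMu m q := by
  obtain ⟨hpair, -, hsum⟩ := hx.1
  have hsum_eq : ∑ l, |x l - 1| = 2 * q := by
    refine hsum.antisymm (not_lt.1 fun hlt => ?_)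
    have h : ∑ l, |x l - 1| = ∑ _l : Fin (2 * m), (1 : ℝ) :=
      Finset.sum_congr rfl fun l _ => abs_sub_one_eq_one_of_mem_extremePoints hx hlt l
    simp only [Finset.sum_const, Finset.card_univ, Fintype.card_fin, nsmul_eq_mul, mul_one] at h
    have : (2 * m : ℝ) < 2 * q := by push_cast at h; linarith
    norm_cast at this
    omega
  refine mem_orbitMu_of_sum_abs_sub_one_eq hqm hpair (fun l => ?_) hsum_eq
  rcases abs_sub_one_eq_zero_or_one_of_mem_extremePoints hx hsum_eq l with h | h
  · exact Or.inr (Or.inl (by linarith [abs_eq_zero.1 h]))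
  · rcases (abs_eq zero_le_one).1 h with h | h
    · exact Or.inr (Or.inr (by linarith))
    · exact Or.inl (by linarith)

lemma finite_orbitMu : (OrbitMu m q).Finite :=
  (Set.finite_range fun σ : Equiv.Perm (Fin (2 * m)) => fun j => (muQ m q (σ⁻¹ j) : ℝ)).subset
    fun _ ⟨σ, _, hx⟩ => ⟨σ, funext fun j => (hx j).symm⟩

lemma muPolytope_subset_convMu (hqm : q < m) : muPolytope m q ⊆ ConvMu m q := by
  rw [← closure_convexHull_extremePoints isCompact_muPolytope convex_muPolytope]
  exact closure_minimal (convexHull_mono fun x hx => mem_orbitMu_of_mem_extremePoints hqm hx)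
    (finite_orbitMu.isCompact_convexHull ℝ).isClosed

theorem convMu_eq_muPolytope (hqm : q < m) : ConvMu m q = muPolytope m q :=
  (convMu_subset_muPolytope hqm.le).antisymm (muPolytope_subset_convMu hqm)

theorem statement10_general (m q : ℕ) (hm : 2 ≤ m) (hq : q ≤ m - 1)
    (t : VecZ m) (σ : Equiv.Perm (Fin (2 * m)))
    (k : ℕ) :
    (SP1' m t σ (k : ℤ) ∧ SP2' m q t σ (k : ℤ)) ↔ nuD m t σ (k : ℤ) ∈ ConvMu m q := by
  rw [convMu_eq_muPolytope (by omega)]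
  have hSP2' (hν : SP1' m t σ k) :
      SP2' m q t σ k ↔ ∑ j, |nuD m t σ k j - 1| ≤ 2 * q := by
    rw [SP2', sum_abs_sub_one_eq hν.1 fun j => int_div_two_cases (hν.2 j).1 (hν.2 j).2]
    simp only [Set.ncard_eq_toFinset_card', Set.toFinset_ofPred]
    constructor <;> intro h <;> linarith
  exact ⟨fun h => ⟨h.1.1, h.1.2, (hSP2' h.1).1 h.2⟩,
    fun h => ⟨⟨h.1, h.2.1⟩, (hSP2' ⟨h.1, h.2.1⟩).2 h.2.2⟩⟩

theorem statement10 (m q : ℕ) (hm : 2 ≤ m) (hq : q ≤ m - 1)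
    (t : VecZ m) (σ : Equiv.Perm (Fin (2 * m))) (ht : InXD m t) (hσ : InSO m σ)
    (k : ℕ) (hk : k ≤ m) :
    (SP1' m t σ (k : ℤ) ∧ SP2' m q t σ (k : ℤ)) ↔ nuD m t σ (k : ℤ) ∈ ConvMu m q :=
  statement10_general m q hm hq t σ k

end TypeD
end
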